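/- arXiv:1809.06961 — 5 statements merged into one kernel-verified Lean document; each statement's English description precedes it below -/
import Mathlib

section
/- Suppose 0 < β_U < 2. Then there is no pair of C² functions (φ_L, φ_U) with φ_L: [0,∞) → (0,1) solving -φ_L'' + β_L φ_L' = φ_L - φ_L², φ_U: (-∞,0] → (0,1) solving -φ_U'' + β_U φ_U' = φ_U - φ_U², satisfying φ_L(0) = φ_U(0) = α ∈ (0,1) and a_U φ_U'(0) = a_L φ_L'(0). -/
open Real Filter

/-- A positive stationary solution of the Fisher-KPP problem on a two-branch river
network: `phiL` on the lower branch, `phiU` on the upper branch, with continuity and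
Kirchhoff conditions at the junction `x = 0`. -/
def IsTwoBranchStatSol (bL bU aL aU a : ℝ) (phiL phiU : ℝ → ℝ) : Prop :=
  ContDiff ℝ 2 phiL ∧ ContDiff ℝ 2 phiU ∧
  (∀ x, 0 < x → -deriv (deriv phiL) x + bL * deriv phiL x = phiL x - phiL x ^ 2) ∧
  (∀ x, 0 < x → 0 < phiL x ∧ phiL x < 1) ∧
  (∀ x, x < 0 → -deriv (deriv phiU) x + bU * deriv phiU x = phiU x - phiU x ^ 2) ∧
  (∀ x, x < 0 → 0 < phiU x ∧ phiU x < 1) ∧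
  phiL 0 = a ∧ phiU 0 = a ∧ aU * deriv phiU 0 = aL * deriv phiL 0

/-!
Since `a_L, a_U > 0`, the Kirchhoff condition gives `φ_U'(0)` and `φ_L'(0)` the same sign. On both
branches `(e^{-βx} φ')' = -e^{-βx} (φ - φ²) < 0`, so `e^{-βx} φ'` is strictly decreasing.

On the lower branch this turns `φ_L'(0) ≤ 0` into `φ_L' ≤ -m < 0` on `[1, ∞)`, so `φ_L` becomes
negative. On the upper branch `φ_U'(0) > 0` makes `φ_U` increasing on `(-∞, 0]`. If `φ_U` stays
above `δ / 2`, where `δ = 1 - β² / 4 > 0` because `β < 2`, then `φ_U - φ_U² ≥ c > 0` near `-∞`, so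
`φ_U' - β φ_U`, and with it `φ_U'`, tends to `+∞` as `x → -∞`, and `φ_U` becomes negative.
Otherwise `φ_U < δ / 2` near `-∞` and `w = e^{-βx/2} φ_U` satisfies `w'' = (φ_U - δ) w ≤ -(δ/2) w`:
such a positive `w` is concave, hence nonincreasing, near `-∞`, so `w'' ≤ -(δ/2) w(b) < 0` there
and `w'` would become positive.
-/

open Set

theorem not_eventually_le_of_tendsto_atBot {α : Type*} {l : Filter α} [l.NeBot] {f : α → ℝ}
    (hf : Tendsto f l atBot) (c : ℝ) : ¬ ∀ᶠ x in l, c ≤ f x := fun h =>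
  let ⟨_, hlt, hle⟩ := ((hf.eventually_lt_atBot c).and h).exists
  hlt.not_ge hle

theorem tendsto_atBot_atBot_of_eventually_le_deriv {f : ℝ → ℝ} (hf : Differentiable ℝ f)
    {c : ℝ} (hc : 0 < c) (h : ∀ᶠ x in atBot, c ≤ deriv f x) : Tendsto f atBot atBot := by
  obtain ⟨b, hb⟩ := eventually_atBot.1 h
  have hle : ∀ x ≤ b, f x ≤ f b - c * b + c * x := fun x hx => by
    have := (convex_Iic b).mul_sub_le_image_sub_of_le_deriv hf.continuous.continuousOn
      hf.differentiableOn (fun y hy => hb y (mem_Iic.1 (interior_subset hy))) x hx b self_mem_Iic hx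
    linarith
  exact tendsto_atBot_mono' atBot (eventually_atBot.2 ⟨b, hle⟩)
    (tendsto_atBot_add_const_left _ _ (tendsto_id.const_mul_atBot hc))

theorem tendsto_atTop_atBot_of_eventually_deriv_le {f : ℝ → ℝ} (hf : Differentiable ℝ f)
    {c : ℝ} (hc : c < 0) (h : ∀ᶠ x in atTop, deriv f x ≤ c) : Tendsto f atTop atBot := by
  obtain ⟨b, hb⟩ := eventually_atTop.1 h
  have hle : ∀ x ≥ b, f x ≤ f b - c * b + c * x := fun x hx => by
    have := (convex_Ici b).image_sub_le_mul_sub_of_deriv_le hf.continuous.continuousOn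
      hf.differentiableOn (fun y hy => hb y (mem_Ici.1 (interior_subset hy))) b self_mem_Ici x hx hx
    linarith
  exact tendsto_atBot_mono' atTop (eventually_atTop.2 ⟨b, hle⟩)
    (tendsto_atBot_add_const_left _ _ (tendsto_id.const_mul_atTop_of_neg hc))

theorem hasDerivAt_exp_mul_mul {ψ : ℝ → ℝ} (γ : ℝ) {x : ℝ} (hψ : DifferentiableAt ℝ ψ x) :
    HasDerivAt (fun y => exp (γ * y) * ψ y) (exp (γ * x) * (deriv ψ x + γ * ψ x)) x :=
  (((hasDerivAt_id' x).const_mul γ).exp.fun_mul hψ.hasDerivAt).congr_deriv (by ring)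

theorem deriv_deriv_exp_mul_mul {φ : ℝ → ℝ} (hφ : Differentiable ℝ φ)
    (hφ' : Differentiable ℝ (deriv φ)) (γ x : ℝ) :
    deriv (deriv fun y => exp (γ * y) * φ y) x =
      exp (γ * x) * (deriv (deriv φ) x + 2 * γ * deriv φ x + γ ^ 2 * φ x) := by
  have hd : deriv (fun y => exp (γ * y) * φ y) = fun y => exp (γ * y) * (deriv φ y + γ * φ y) :=
    funext fun y => (hasDerivAt_exp_mul_mul γ (hφ y)).deriv
  have hsum : HasDerivAt (fun y => deriv φ y + γ * φ y)
      (deriv (deriv φ) x + γ * deriv φ x) x :=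
    (hφ' x).hasDerivAt.add ((hφ x).hasDerivAt.const_mul γ)
  rw [hd, (hasDerivAt_exp_mul_mul γ hsum.differentiableAt).deriv, hsum.deriv]
  ring

theorem strictAntiOn_exp_mul_deriv {φ : ℝ → ℝ} (hφ' : Differentiable ℝ (deriv φ)) {β : ℝ}
    {s : Set ℝ} (hs : Convex ℝ s)
    (h : ∀ x ∈ interior s, deriv (deriv φ) x < β * deriv φ x) :
    StrictAntiOn (fun x => exp (-β * x) * deriv φ x) s :=
  strictAntiOn_of_deriv_neg hs (by have := hφ'.continuous; fun_prop) fun x hx => by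
    rw [(hasDerivAt_exp_mul_mul (-β) (hφ' x)).deriv]
    exact mul_neg_of_pos_of_neg (exp_pos _) (by linarith [h x hx])

theorem monotoneOn_Iic_of_deriv_deriv_lt {φ : ℝ → ℝ} (hφ : Differentiable ℝ φ)
    (hφ' : Differentiable ℝ (deriv φ)) {β b : ℝ}
    (h : ∀ x < b, deriv (deriv φ) x < β * deriv φ x) (hb : 0 < deriv φ b) :
    MonotoneOn φ (Iic b) := by
  have hg := strictAntiOn_exp_mul_deriv hφ' (convex_Iic b) fun x hx =>
    h x (by rwa [interior_Iic] at hx)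
  refine monotoneOn_of_deriv_nonneg (convex_Iic b) hφ.continuous.continuousOn
    hφ.differentiableOn fun x hx => ?_
  rw [interior_Iic] at hx
  have hgx := (mul_pos (exp_pos _) hb).trans (hg (mem_Iic.2 hx.le) self_mem_Iic hx)
  exact (pos_of_mul_pos_right hgx (exp_pos _).le).le

theorem not_eventually_pos_of_deriv_deriv_le_neg_mul {u : ℝ → ℝ} (hu : Differentiable ℝ u)
    (hu' : Differentiable ℝ (deriv u)) {κ : ℝ} (hκ : 0 < κ)
    (hu'' : ∀ᶠ x in atBot, deriv (deriv u) x ≤ -κ * u x) : ¬ ∀ᶠ x in atBot, 0 < u x := by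
  intro hpos
  obtain ⟨b, hb⟩ := eventually_atBot.1 (hu''.and hpos)
  have hconcave : AntitoneOn (deriv u) (Iic b) :=
    antitoneOn_of_deriv_nonpos (convex_Iic b) hu'.continuous.continuousOn hu'.differentiableOn
      fun x hx => by
        obtain ⟨h1, h2⟩ := hb x (mem_Iic.1 (interior_subset hx))
        nlinarith
  have hslope : ∀ x ≤ b, deriv u x ≤ 0 := by
    intro x hx
    by_contra! hx'
    exact not_eventually_le_of_tendsto_atBot
      (tendsto_atBot_atBot_of_eventually_le_deriv hu hx'
        (eventually_atBot.2 ⟨x, fun y hy => hconcave (hy.trans hx) hx hy⟩))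
      0 (hpos.mono fun _ => le_of_lt)
  have hlow : ∀ x ≤ b, u b ≤ u x := fun x hx =>
    antitoneOn_of_deriv_nonpos (convex_Iic b) hu.continuous.continuousOn hu.differentiableOn
      (fun y hy => hslope y (mem_Iic.1 (interior_subset hy))) hx self_mem_Iic hx
  have hlim := tendsto_atBot_atBot_of_eventually_le_deriv hu'.neg (mul_pos hκ (hb b le_rfl).2)
    (eventually_atBot.2 ⟨b, fun x hx => by
      rw [deriv.neg']
      nlinarith [(hb x hx).1, hlow x hx]⟩)
  exact not_eventually_le_of_tendsto_atBot hlim 0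
    (eventually_atBot.2 ⟨b, fun x hx => neg_nonneg.2 (hslope x hx)⟩)

theorem not_eventually_pos_of_deriv_deriv_le_mul_deriv_sub {φ : ℝ → ℝ}
    (hφ : Differentiable ℝ φ) (hφ' : Differentiable ℝ (deriv φ)) {β c : ℝ} (hβ : 0 ≤ β)
    (hc : 0 < c) (hφ'' : ∀ᶠ x in atBot, deriv (deriv φ) x ≤ β * deriv φ x - c) :
    ¬ ∀ᶠ x in atBot, 0 < φ x := by
  intro hpos
  have hv : Tendsto (fun x => β * φ x - deriv φ x) atBot atBot :=
    tendsto_atBot_atBot_of_eventually_le_deriv ((hφ.const_mul β).sub hφ') hc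
      (hφ''.mono fun x hx => by
        rw [deriv_fun_sub ((hφ x).const_mul β) (hφ' x), deriv_const_mul _ (hφ x)]
        linarith)
  have hslope : ∀ᶠ x in atBot, 1 ≤ deriv φ x :=
    ((hv.eventually_lt_atBot (-1)).and hpos).mono fun x ⟨h1, h2⟩ => by nlinarith
  exact not_eventually_le_of_tendsto_atBot
    (tendsto_atBot_atBot_of_eventually_le_deriv hφ one_pos hslope) 0 (hpos.mono fun _ => le_of_lt)

theorem deriv_zero_nonpos_of_upper_branch {β : ℝ} (hβ : 0 ≤ β) (hβ2 : β < 2) {φ : ℝ → ℝ}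
    (hφ : ContDiff ℝ 2 φ)
    (hode : ∀ x, x < 0 → -deriv (deriv φ) x + β * deriv φ x = φ x - φ x ^ 2)
    (hrange : ∀ x, x < 0 → 0 < φ x ∧ φ x < 1) : deriv φ 0 ≤ 0 := by
  by_contra! h0
  have hd : Differentiable ℝ φ := hφ.differentiable (by norm_num)
  have hd' : Differentiable ℝ (deriv φ) := hφ.differentiable_deriv_two
  have hmono : MonotoneOn φ (Iic 0) := monotoneOn_Iic_of_deriv_deriv_lt hd hd'
    (fun x hx => by nlinarith [hode x hx, hrange x hx]) h0
  have hpos : ∀ᶠ x in atBot, 0 < φ x := (eventually_lt_atBot 0).mono fun x hx => (hrange x hx).1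
  set δ := 1 - β ^ 2 / 4 with hδ_def
  have hδ : 0 < δ := by nlinarith
  by_cases hsmall : ∃ x₀ < 0, φ x₀ < δ / 2
  · obtain ⟨x₀, hx₀, hφx₀⟩ := hsmall
    have hu : ContDiff ℝ 2 fun x => exp (-(β / 2) * x) * φ x := by fun_prop
    refine not_eventually_pos_of_deriv_deriv_le_neg_mul (hu.differentiable (by norm_num))
      hu.differentiable_deriv_two (half_pos hδ) ?_ (hpos.mono fun x hx => mul_pos (exp_pos _) hx)
    filter_upwards [eventually_le_atBot x₀] with x hx
    have hx0 : x < 0 := hx.trans_lt hx₀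
    have hφx : φ x < δ / 2 := (hmono (mem_Iic.2 hx0.le) (mem_Iic.2 hx₀.le) hx).trans_lt hφx₀
    have hkey : deriv (deriv φ) x + 2 * (-(β / 2)) * deriv φ x + (-(β / 2)) ^ 2 * φ x ≤
        -(δ / 2) * φ x := by
      nlinarith [hode x hx0, mul_pos (hrange x hx0).1 (sub_pos.2 hφx)]
    rw [deriv_deriv_exp_mul_mul hd hd']
    nlinarith [mul_le_mul_of_nonneg_left hkey (exp_pos (-(β / 2) * x)).le]
  · push Not at hsmall
    have hφ1 : φ (-1) < 1 := (hrange (-1) (by norm_num)).2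
    refine not_eventually_pos_of_deriv_deriv_le_mul_deriv_sub hd hd' hβ
      (c := δ / 2 * (1 - φ (-1))) (by nlinarith) ?_ hpos
    filter_upwards [eventually_le_atBot (-1)] with x hx
    have hx0 : x < 0 := by linarith
    have hφx : φ x ≤ φ (-1) := hmono (mem_Iic.2 hx0.le) (mem_Iic.2 (by norm_num)) hx
    nlinarith [hode x hx0, mul_le_mul_of_nonneg_right (hsmall x hx0) (by linarith : 0 ≤ 1 - φ x)]

theorem deriv_zero_pos_of_lower_branch {β : ℝ} (hβ : 0 ≤ β) {φ : ℝ → ℝ} (hφ : ContDiff ℝ 2 φ)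
    (hode : ∀ x, 0 < x → -deriv (deriv φ) x + β * deriv φ x = φ x - φ x ^ 2)
    (hrange : ∀ x, 0 < x → 0 < φ x ∧ φ x < 1) : 0 < deriv φ 0 := by
  by_contra! h0
  have hg := strictAntiOn_exp_mul_deriv hφ.differentiable_deriv_two (β := β) (convex_Ici 0)
    fun x hx => by
      rw [interior_Ici] at hx
      nlinarith [hode x hx, hrange x hx]
  set m := exp (-β * 1) * deriv φ 1
  have hm : m < 0 := by
    have h := hg self_mem_Ici (mem_Ici.2 zero_le_one) zero_lt_one
    simp only [mul_zero, exp_zero, one_mul] at h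
    linarith
  have hslope : ∀ᶠ x in atTop, deriv φ x ≤ m := by
    filter_upwards [eventually_ge_atTop 1] with x hx
    have hgx : exp (-β * x) * deriv φ x ≤ m :=
      hg.antitoneOn (mem_Ici.2 zero_le_one) (mem_Ici.2 (zero_le_one.trans hx)) hx
    have he : exp (-β * x) ≤ 1 := exp_le_one_iff.2 (by nlinarith)
    have he0 := exp_pos (-β * x)
    have hneg : deriv φ x < 0 := by nlinarith
    nlinarith
  exact not_eventually_le_of_tendsto_atBot
    (tendsto_atTop_atBot_of_eventually_deriv_le (hφ.differentiable (by norm_num)) hm hslope) 0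
    ((eventually_gt_atTop 0).mono fun x hx => (hrange x hx).1.le)

theorem two_branch_no_solution_general (bL bU aL aU a : ℝ)
    (hbL : 0 < bL) (hbU : 0 < bU) (haL : 0 < aL) (haU : 0 < aU)
    (hbU2 : bU < 2) :
    ¬ ∃ phiL phiU : ℝ → ℝ, IsTwoBranchStatSol bL bU aL aU a phiL phiU := by
  rintro ⟨phiL, phiU, hCL, hCU, hodeL, hrangeL, hodeU, hrangeU, -, -, hkirchhoff⟩
  have hU := deriv_zero_nonpos_of_upper_branch hbU.le hbU2 hCU hodeU hrangeU
  have hL := deriv_zero_pos_of_lower_branch hbL.le hCL hodeL hrangeL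
  have hprod := mul_nonpos_of_nonneg_of_nonpos haU.le hU
  rw [hkirchhoff] at hprod
  exact hprod.not_gt (mul_pos haL hL)

/-- Case (i): if `0 < bU < 2` there is no positive stationary solution. -/
theorem two_branch_no_solution (bL bU aL aU a : ℝ)
    (hbL : 0 < bL) (hbU : 0 < bU) (haL : 0 < aL) (haU : 0 < aU)
    (hcons : aL * bL = aU * bU) (hbU2 : bU < 2) (ha : a ∈ Set.Ioo (0 : ℝ) 1) :
    ¬ ∃ phiL phiU : ℝ → ℝ, IsTwoBranchStatSol bL bU aL aU a phiL phiU :=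
  two_branch_no_solution_general bL bU aL aU a hbL hbU haL haU hbU2
end

section
/- Let β_U > 2 and let φ: (-∞,0] → (0,1) be a solution of -φ'' + β_U φ' = φ - φ² with φ(-∞) = 0 and φ' > 0. Then either there exists c > 0 with φ(x) = (c+o(1)) e^{½(β_U + √(β_U²-4))x} as x → -∞, or there exists c > 0 with φ(x) = (c+o(1)) e^{½(β_U - √(β_U²-4))x} as x → -∞. -/
/-!
Write `kp`, `km` for the roots `(bU ± √(bU² - 4)) / 2` and `v = φ' / φ`. The ODE factors as
`(D - kp) (D - km) φ = φ²`, so for `{k, k'} = {kp, km}` the function `(φ' - k φ) e^{-k' x}` has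
derivative `φ² e^{-k' x} ≥ 0`: once `v < k` at some point, `v < k` further left. Moreover `v`
solves the Riccati equation `v' = (kp - v) (v - km) + φ`. This leaves three regimes on `(-∞, 0]`.

* `v < km` somewhere: since `φ → 0`, the Riccati equation first pushes `v` close to `km`, so `φ`
  decays exponentially, and feeding this back shows `km - v = O(e^{μ x})`.
* `km ≤ v` everywhere and `v < kp` somewhere: `v - km` is nondecreasing further left, so its
  Riccati coefficient `kp - v` is bounded below and `v - km` decays exponentially.
* `kp ≤ v` everywhere: `(φ' - kp φ) e^{-km x}` cannot stay above any `δ > 0` at `-∞`, since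
  otherwise `φ e^{-kp x}` would turn negative; integrating its derivative from `-∞` gives
  `0 ≤ v - kp ≤ φ / (2 kp - km) = O(e^{kp x})`.

In each case `v - k = O(e^{ν x})` for `k = km` or `k = kp` and some `ν > 0`, so the derivative
of `log (φ e^{-k x})` is integrable at `-∞` and `φ e^{-k x}` has a positive limit.
-/

open Real Filter Set Asymptotics Topology

theorem monotoneOn_Iic_of_hasDerivAt_nonneg {f f' : ℝ → ℝ} {a : ℝ}
    (hf : ∀ x ≤ a, HasDerivAt f (f' x) x) (hf' : ∀ x ≤ a, 0 ≤ f' x) :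
    MonotoneOn f (Iic a) :=
  monotoneOn_of_hasDerivWithinAt_nonneg (convex_Iic a)
    (fun x hx => (hf x hx).continuousAt.continuousWithinAt)
    (fun x hx => (hf x (mem_Iic.1 (interior_subset hx))).hasDerivWithinAt)
    (fun x hx => hf' x (mem_Iic.1 (interior_subset hx)))

theorem antitoneOn_Iic_of_hasDerivAt_nonpos {f f' : ℝ → ℝ} {a : ℝ}
    (hf : ∀ x ≤ a, HasDerivAt f (f' x) x) (hf' : ∀ x ≤ a, f' x ≤ 0) :
    AntitoneOn f (Iic a) :=
  antitoneOn_of_hasDerivWithinAt_nonpos (convex_Iic a)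
    (fun x hx => (hf x hx).continuousAt.continuousWithinAt)
    (fun x hx => (hf x (mem_Iic.1 (interior_subset hx))).hasDerivWithinAt)
    (fun x hx => hf' x (mem_Iic.1 (interior_subset hx)))

theorem exists_tendsto_atBot_of_monotoneOn_Iic {f : ℝ → ℝ} {a m : ℝ}
    (hf : MonotoneOn f (Iic a)) (hm : ∀ x ≤ a, m ≤ f x) :
    ∃ c, Tendsto f atBot (𝓝 c) := by
  have hmono : Monotone fun x => f (min x a) := fun x y hxy =>
    hf (min_le_right x a) (min_le_right y a) (min_le_min_right a hxy)
  refine ⟨_, (tendsto_atBot_ciInf hmono ⟨m, ?_⟩).congr' ?_⟩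
  · rintro _ ⟨x, rfl⟩
    exact hm _ (min_le_right x a)
  · filter_upwards [eventually_le_atBot a] with x hx
    rw [min_eq_left hx]

theorem le_mul_exp_of_mul_le_deriv {g g' : ℝ → ℝ} {a l : ℝ}
    (hg : ∀ x ≤ a, HasDerivAt g (g' x) x) (hg' : ∀ x ≤ a, l * g x ≤ g' x) :
    ∀ x ≤ a, g x ≤ g a * exp (l * (x - a)) := by
  have hmono : MonotoneOn (fun x => g x * exp (-l * x)) (Iic a) :=
    monotoneOn_Iic_of_hasDerivAt_nonneg
      (fun x hx => (hg x hx).mul (hasDerivAt_const_mul (-l)).exp) fun x hx => by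
        nlinarith [hg' x hx, exp_pos (-l * x)]
  intro x hx
  have key : g x * exp (-l * x) ≤ g a * exp (-l * a) := hmono hx self_mem_Iic hx
  calc g x = g x * exp (-l * x) * exp (l * x) := by rw [mul_assoc, ← exp_add]; simp
    _ ≤ g a * exp (-l * a) * exp (l * x) := by gcongr
    _ = g a * exp (l * (x - a)) := by rw [mul_assoc, ← exp_add]; ring_nf

theorem le_mul_exp_of_le_logDeriv {φ φ' : ℝ → ℝ} {a l : ℝ}
    (hφ : ∀ x ≤ a, HasDerivAt φ (φ' x) x) (hpos : ∀ x ≤ a, 0 < φ x)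
    (hle : ∀ x ≤ a, l ≤ φ' x / φ x) :
    ∀ x ≤ a, φ x ≤ φ a * exp (l * (x - a)) :=
  le_mul_exp_of_mul_le_deriv hφ fun x hx => (le_div_iff₀ (hpos x hx)).1 (hle x hx)

theorem le_of_mul_sub_mul_exp_le_deriv {g g' : ℝ → ℝ} {a l μ H : ℝ} (hμl : μ < l)
    (hg : ∀ x ≤ a, HasDerivAt g (g' x) x) (hg' : ∀ x ≤ a, l * g x - H * exp (μ * x) ≤ g' x) :
    ∀ x ≤ a, g x ≤ H / (l - μ) * exp (μ * x) +
      (g a - H / (l - μ) * exp (μ * a)) * exp (l * (x - a)) := by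
  have hlμ : l - μ ≠ 0 := sub_ne_zero.2 hμl.ne'
  have key := le_mul_exp_of_mul_le_deriv (l := l) (g := fun x => g x - H / (l - μ) * exp (μ * x))
    (fun x hx => (hg x hx).sub (((hasDerivAt_const_mul μ).exp).const_mul _)) fun x hx => by
      have h := hg' x hx
      have hc : H / (l - μ) * (l - μ) = H := div_mul_cancel₀ H hlμ
      linear_combination h - exp (μ * x) * hc
  intro x hx
  linarith [key x hx]

theorem tendsto_atBot_of_mul_exp_le_deriv {f f' : ℝ → ℝ} {a δ μ : ℝ} (hδ : 0 < δ) (hμ : μ < 0)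
    (hf : ∀ x ≤ a, HasDerivAt f (f' x) x) (hf' : ∀ x ≤ a, δ * exp (μ * x) ≤ f' x) :
    Tendsto f atBot atBot := by
  have hmono : MonotoneOn (fun x => f x - δ / μ * exp (μ * x)) (Iic a) :=
    monotoneOn_Iic_of_hasDerivAt_nonneg
      (fun x hx => (hf x hx).sub (((hasDerivAt_const_mul μ).exp).const_mul _)) fun x hx => by
        have h := hf' x hx
        field_simp [hμ.ne]
        linarith
  have hexp : Tendsto (fun x => δ / μ * exp (μ * x)) atBot atBot :=
    (tendsto_exp_atTop.comp (tendsto_id.const_mul_atBot_of_neg hμ)).const_mul_atTop_of_neg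
      (div_neg_of_pos_of_neg hδ hμ)
  refine tendsto_atBot_mono' atBot ?_
    (tendsto_atBot_add_const_left _ (f a - δ / μ * exp (μ * a)) hexp)
  filter_upwards [eventually_le_atBot a] with x hx
  linarith [hmono hx self_mem_Iic hx]

theorem exists_tendsto_atBot_of_abs_deriv_le {g g' : ℝ → ℝ} {a D ν : ℝ} (hν : 0 < ν)
    (hg : ∀ x ≤ a, HasDerivAt g (g' x) x) (hg' : ∀ x ≤ a, |g' x| ≤ D * exp (ν * x)) :
    ∃ c, Tendsto g atBot (𝓝 c) := by
  have hD : 0 ≤ D := nonneg_of_mul_nonneg_left ((abs_nonneg _).trans (hg' a le_rfl)) (exp_pos _)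
  set E := fun x => D / ν * exp (ν * x)
  have hE : ∀ x, HasDerivAt E (D * exp (ν * x)) x := fun x =>
    (((hasDerivAt_const_mul ν).exp).const_mul (D / ν)).congr_deriv (by field_simp)
  have hE0 : ∀ x, 0 ≤ E x := fun x => by positivity
  have hup : MonotoneOn (fun x => g x + E x) (Iic a) :=
    monotoneOn_Iic_of_hasDerivAt_nonneg (fun x hx => (hg x hx).add (hE x)) fun x hx => by
      linarith [neg_le_of_abs_le (hg' x hx)]
  have hdown : AntitoneOn (fun x => g x - E x) (Iic a) :=
    antitoneOn_Iic_of_hasDerivAt_nonpos (fun x hx => (hg x hx).sub (hE x)) fun x hx => by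
      linarith [le_of_abs_le (hg' x hx)]
  obtain ⟨c, hc⟩ := exists_tendsto_atBot_of_monotoneOn_Iic hup (m := g a - E a) fun x hx => by
    linarith [hdown hx self_mem_Iic hx, hE0 x]
  have hE_lim : Tendsto E atBot (𝓝 0) := by
    simpa using (tendsto_exp_atBot.comp (tendsto_id.const_mul_atBot hν)).const_mul (D / ν)
  exact ⟨c, by simpa using hc.sub hE_lim⟩

theorem exists_pos_tendsto_div_exp_of_isBigO {φ φ' : ℝ → ℝ} {a k ν : ℝ} (hν : 0 < ν)
    (hφ : ∀ x ≤ a, HasDerivAt φ (φ' x) x) (hpos : ∀ x ≤ a, 0 < φ x)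
    (hO : (fun x => φ' x / φ x - k) =O[atBot] fun x => exp (ν * x)) :
    ∃ c > 0, Tendsto (fun x => φ x / exp (k * x)) atBot (𝓝 c) := by
  obtain ⟨D, hD⟩ := hO.bound
  obtain ⟨b, hb⟩ := eventually_atBot.1 hD
  have hab : ∀ {x}, x ≤ min a b → x ≤ a := fun hx => hx.trans (min_le_left a b)
  obtain ⟨c, hc⟩ := exists_tendsto_atBot_of_abs_deriv_le (a := min a b)
    (g := fun x => log (φ x) - k * x) hν
    (fun x hx => ((hφ x (hab hx)).log (hpos x (hab hx)).ne').sub (hasDerivAt_const_mul k))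
    fun x hx => by simpa using hb x (hx.trans (min_le_right a b))
  refine ⟨exp c, exp_pos c, hc.rexp.congr' ?_⟩
  filter_upwards [eventually_le_atBot a] with x hx
  rw [exp_sub, exp_log (hpos x hx)]

theorem isBigO_exp_mul_sub {l μ : ℝ} (a : ℝ) (hμl : μ ≤ l) :
    (fun x => exp (l * (x - a))) =O[atBot] fun x => exp (μ * x) := by
  rw [isBigO_exp_comp_exp_comp]
  refine isBoundedUnder_of_eventually_le (a := -(l * a)) ?_
  filter_upwards [eventually_le_atBot 0] with x hx
  simp only [Pi.sub_apply]
  nlinarith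

theorem exists_forall_le_of_mul_sub_le_deriv {σ σ' h : ℝ → ℝ} {a q ε : ℝ} (hq : 0 < q)
    (hε : 0 < ε) (hσ : ∀ x ≤ a, HasDerivAt σ (σ' x) x) (hσ' : ∀ x ≤ a, q * σ x - h x ≤ σ' x)
    (hh : Tendsto h atBot (𝓝 0)) :
    ∃ b ≤ a, ∀ x ≤ b, σ x ≤ ε := by
  obtain ⟨y, hy⟩ := eventually_atBot.1
    ((hh.eventually (ge_mem_nhds (by positivity : 0 < q * ε / 2))).and (eventually_le_atBot a))
  have hya : y ≤ a := (hy y le_rfl).2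
  have hbound := le_of_mul_sub_mul_exp_le_deriv (μ := 0) (H := q * ε / 2) hq
    (fun x hx => hσ x (hx.trans hya)) fun x hx => by
      simpa using (sub_le_sub_left (hy x hx).1 _).trans (hσ' x (hx.trans hya))
  simp only [sub_zero, zero_mul, exp_zero, mul_one] at hbound
  set K := σ y - q * ε / 2 / q
  have hK : Tendsto (fun x => K * exp (q * (x - y))) atBot (𝓝 0) := by
    simpa [← sub_eq_add_neg] using (tendsto_exp_atBot.comp
      ((tendsto_atBot_add_const_right _ (-y) tendsto_id).const_mul_atBot hq)).const_mul K
  obtain ⟨b, hb⟩ := eventually_atBot.1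
    ((hK.eventually (ge_mem_nhds (by positivity : 0 < ε / 2))).and (eventually_le_atBot y))
  refine ⟨min b y, (min_le_right b y).trans hya, fun x hx => ?_⟩
  have h1 := hbound x (hx.trans (min_le_right b y))
  have h2 := (hb x (hx.trans (min_le_left b y))).1
  have h3 : q * ε / 2 / q = ε / 2 := by field_simp
  linarith

section KPP

variable {k₁ k₂ kp km : ℝ} {φ φ' φ'' : ℝ → ℝ}

theorem hasDerivAt_sub_mul_mul_exp (hφ : ∀ x ≤ 0, HasDerivAt φ (φ' x) x)
    (hφ' : ∀ x ≤ 0, HasDerivAt φ' (φ'' x) x)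
    (hode : ∀ x ≤ 0, φ'' x = (k₁ + k₂) * φ' x - k₁ * k₂ * φ x + φ x ^ 2) {x : ℝ} (hx : x ≤ 0) :
    HasDerivAt (fun y => (φ' y - k₁ * φ y) * exp (-k₂ * y)) (φ x ^ 2 * exp (-k₂ * x)) x :=
  (((hφ' x hx).sub ((hφ x hx).const_mul k₁)).mul (hasDerivAt_const_mul (-k₂)).exp).congr_deriv
    (by rw [hode x hx]; simp only [Pi.sub_apply]; ring)

theorem logDeriv_lt_of_le_of_logDeriv_lt (hφ : ∀ x ≤ 0, HasDerivAt φ (φ' x) x)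
    (hφ' : ∀ x ≤ 0, HasDerivAt φ' (φ'' x) x)
    (hode : ∀ x ≤ 0, φ'' x = (k₁ + k₂) * φ' x - k₁ * k₂ * φ x + φ x ^ 2)
    (hpos : ∀ x ≤ 0, 0 < φ x) {x₀ : ℝ} (hx₀ : x₀ ≤ 0) (hlt : φ' x₀ / φ x₀ < k₁) :
    ∀ x ≤ x₀, φ' x / φ x < k₁ := by
  have hmono : MonotoneOn (fun y => (φ' y - k₁ * φ y) * exp (-k₂ * y)) (Iic x₀) :=
    monotoneOn_Iic_of_hasDerivAt_nonneg
      (fun x hx => hasDerivAt_sub_mul_mul_exp hφ hφ' hode (hx.trans hx₀)) fun x _ => by positivity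
  intro x hx
  rw [div_lt_iff₀ (hpos x₀ hx₀)] at hlt
  rw [div_lt_iff₀ (hpos x (hx.trans hx₀))]
  by_contra! hle
  have h₀ : (φ' x₀ - k₁ * φ x₀) * exp (-k₂ * x₀) < 0 :=
    mul_neg_of_neg_of_pos (by linarith) (exp_pos _)
  have h : 0 ≤ (φ' x - k₁ * φ x) * exp (-k₂ * x) := mul_nonneg (by linarith) (exp_pos _).le
  linarith [hmono hx self_mem_Iic hx]

theorem hasDerivAt_logDeriv (hφ : ∀ x ≤ 0, HasDerivAt φ (φ' x) x)
    (hφ' : ∀ x ≤ 0, HasDerivAt φ' (φ'' x) x)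
    (hode : ∀ x ≤ 0, φ'' x = (k₁ + k₂) * φ' x - k₁ * k₂ * φ x + φ x ^ 2) {x : ℝ} (hx : x ≤ 0)
    (hφx : φ x ≠ 0) :
    HasDerivAt (fun y => φ' y / φ y) ((k₁ - φ' x / φ x) * (φ' x / φ x - k₂) + φ x) x :=
  ((hφ' x hx).div (hφ x hx) hφx).congr_deriv (by rw [hode x hx]; field_simp; ring)

theorem exists_sub_mul_mul_exp_lt (hk : km < kp) (hφ : ∀ x ≤ 0, HasDerivAt φ (φ' x) x)
    (hpos : ∀ x ≤ 0, 0 < φ x) {x δ : ℝ} (hx : x ≤ 0) (hδ : 0 < δ) :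
    ∃ t ≤ x, (φ' t - kp * φ t) * exp (-km * t) < δ := by
  by_contra! hδle
  have hw := tendsto_atBot_of_mul_exp_le_deriv hδ (sub_neg.2 hk)
    (f := fun t => φ t * exp (-kp * t)) (a := x)
    (fun t ht => (hφ t (ht.trans hx)).mul (hasDerivAt_const_mul (-kp)).exp) fun t ht => by
      have hexp : (φ' t - kp * φ t) * exp (-km * t) * exp ((km - kp) * t) =
          (φ' t - kp * φ t) * exp (-kp * t) := by
        rw [mul_assoc, ← exp_add]
        congr 2
        ring
      have := mul_le_mul_of_nonneg_right (hδle t ht) (exp_pos ((km - kp) * t)).le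
      linarith
  obtain ⟨t, hwt, ht⟩ := ((hw.eventually_lt_atBot 0).and (eventually_le_atBot x)).exists
  exact (mul_pos (hpos t (ht.trans hx)) (exp_pos _)).not_gt hwt

theorem sub_mul_le_sq_div_of_le_logDeriv (hkm : 0 < km) (hk : km < kp)
    (hφ : ∀ x ≤ 0, HasDerivAt φ (φ' x) x) (hφ' : ∀ x ≤ 0, HasDerivAt φ' (φ'' x) x)
    (hode : ∀ x ≤ 0, φ'' x = (kp + km) * φ' x - kp * km * φ x + φ x ^ 2)
    (hpos : ∀ x ≤ 0, 0 < φ x) (hle : ∀ x ≤ 0, kp ≤ φ' x / φ x) {x : ℝ} (hx : x ≤ 0) :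
    φ' x - kp * φ x ≤ φ x ^ 2 / (2 * kp - km) := by
  set c := 2 * kp - km
  have hc : 0 < c := by linarith
  -- `W * exp (c * t)` bounds `φ t ^ 2 * exp (-km * t)` on `Iic x` as `φ e^{-kp t}` increases
  set W := φ x ^ 2 * exp (-(2 * kp) * x)
  have hH : AntitoneOn
      (fun t => (φ' t - kp * φ t) * exp (-km * t) - W / c * exp (c * t)) (Iic x) := by
    refine antitoneOn_Iic_of_hasDerivAt_nonpos (fun t ht =>
      (hasDerivAt_sub_mul_mul_exp hφ hφ' hode (ht.trans hx)).sub
        (((hasDerivAt_const_mul c).exp).const_mul _)) fun t ht => ?_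
    have hgrow : φ t ≤ φ x * exp (kp * (t - x)) := le_mul_exp_of_le_logDeriv
      (fun s hs => hφ s (hs.trans hx)) (fun s hs => hpos s (hs.trans hx))
      (fun s hs => hle s (hs.trans hx)) t ht
    have hexp : exp (kp * (t - x)) ^ 2 * exp (-km * t) = exp (-(2 * kp) * x) * exp (c * t) := by
      rw [sq, ← exp_add, ← exp_add, ← exp_add]
      congr 1
      ring
    have hsq : φ t ^ 2 * exp (-km * t) ≤ W * exp (c * t) :=
      calc φ t ^ 2 * exp (-km * t) ≤ (φ x * exp (kp * (t - x))) ^ 2 * exp (-km * t) := by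
            gcongr
            exact (hpos t (ht.trans hx)).le
        _ = W * exp (c * t) := by linear_combination φ x ^ 2 * hexp
    have hcancel : W / c * (exp (c * t) * c) = W * exp (c * t) := by field_simp
    linarith
  by_contra! hlt
  have hWx : W * exp (c * x) = φ x ^ 2 * exp (-km * x) := by
    simp only [W, c, mul_assoc, ← exp_add]
    congr 2
    ring
  have hδ : 0 < (φ' x - kp * φ x) * exp (-km * x) - W / c * exp (c * x) := by
    rw [div_mul_eq_mul_div, hWx, sub_pos, div_lt_iff₀ hc]
    rw [div_lt_iff₀ hc] at hlt
    nlinarith [exp_pos (-km * x)]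
  obtain ⟨t, ht, hGt⟩ := exists_sub_mul_mul_exp_lt hk hφ hpos hx hδ
  have hWt : 0 ≤ W / c * exp (c * t) := by positivity
  linarith [hH ht self_mem_Iic ht]

theorem isBigO_logDeriv_sub_of_le_logDeriv (hkm : 0 < km) (hk : km < kp)
    (hφ : ∀ x ≤ 0, HasDerivAt φ (φ' x) x) (hφ' : ∀ x ≤ 0, HasDerivAt φ' (φ'' x) x)
    (hode : ∀ x ≤ 0, φ'' x = (kp + km) * φ' x - kp * km * φ x + φ x ^ 2)
    (hpos : ∀ x ≤ 0, 0 < φ x) (hle : ∀ x ≤ 0, kp ≤ φ' x / φ x) :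
    (fun x => φ' x / φ x - kp) =O[atBot] fun x => exp (kp * x) := by
  refine (IsBigO.of_norm_eventuallyLE
    (g := fun x => φ 0 / (2 * kp - km) * exp (kp * x)) ?_).trans
    ((isBigO_refl _ _).const_mul_left _)
  filter_upwards [eventually_le_atBot 0] with x hx
  have hφx := hpos x hx
  have hgrow : φ x ≤ φ 0 * exp (kp * (x - 0)) := le_mul_exp_of_le_logDeriv hφ hpos hle x hx
  rw [sub_zero] at hgrow
  rw [norm_eq_abs, abs_of_nonneg (sub_nonneg.2 (hle x hx))]
  calc φ' x / φ x - kp = (φ' x - kp * φ x) / φ x := by field_simp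
    _ ≤ φ x ^ 2 / (2 * kp - km) / φ x := by
        gcongr
        exact sub_mul_le_sq_div_of_le_logDeriv hkm hk hφ hφ' hode hpos hle hx
    _ = φ x / (2 * kp - km) := by field_simp
    _ ≤ φ 0 / (2 * kp - km) * exp (kp * x) := by
        rw [div_mul_eq_mul_div]
        gcongr
        linarith

theorem isBigO_logDeriv_sub_of_le_of_lt (hφ : ∀ x ≤ 0, HasDerivAt φ (φ' x) x)
    (hφ' : ∀ x ≤ 0, HasDerivAt φ' (φ'' x) x)
    (hode : ∀ x ≤ 0, φ'' x = (kp + km) * φ' x - kp * km * φ x + φ x ^ 2)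
    (hpos : ∀ x ≤ 0, 0 < φ x) (hle : ∀ x ≤ 0, km ≤ φ' x / φ x) {x₀ : ℝ} (hx₀ : x₀ ≤ 0)
    (hlt : φ' x₀ / φ x₀ < kp) :
    ∃ ν > 0, (fun x => φ' x / φ x - km) =O[atBot] fun x => exp (ν * x) := by
  set v := fun x => φ' x / φ x
  have hv : ∀ x ≤ x₀, HasDerivAt (fun y => v y - km) ((kp - v x) * (v x - km) + φ x) x :=
    fun x hx => (hasDerivAt_logDeriv hφ hφ' hode (hx.trans hx₀)
      (hpos x (hx.trans hx₀)).ne').sub_const km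
  have hvlt := logDeriv_lt_of_le_of_logDeriv_lt hφ hφ' hode hpos hx₀ hlt
  have hmono : MonotoneOn (fun y => v y - km) (Iic x₀) :=
    monotoneOn_Iic_of_hasDerivAt_nonneg hv fun x hx => by
      have := hle x (hx.trans hx₀)
      have := hvlt x hx
      have := hpos x (hx.trans hx₀)
      nlinarith
  -- on `Iic x₀` the factor `kp - v` stays above its value at `x₀`, so `v - km` decays exponentially
  have hgron := le_mul_exp_of_mul_le_deriv (l := kp - v x₀) hv fun x hx => by
    have := hmono hx self_mem_Iic hx
    have := hle x (hx.trans hx₀)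
    have := hpos x (hx.trans hx₀)
    nlinarith
  refine ⟨kp - v x₀, sub_pos.2 hlt, (IsBigO.of_norm_eventuallyLE ?_).trans
    ((isBigO_exp_mul_sub x₀ le_rfl).const_mul_left (v x₀ - km))⟩
  filter_upwards [eventually_le_atBot x₀] with x hx
  rw [norm_eq_abs, abs_of_nonneg (sub_nonneg.2 (hle x (hx.trans hx₀)))]
  exact hgron x hx

theorem isBigO_logDeriv_sub_of_logDeriv_lt (hkm : 0 < km) (hk : km < kp)
    (hφ : ∀ x ≤ 0, HasDerivAt φ (φ' x) x) (hφ' : ∀ x ≤ 0, HasDerivAt φ' (φ'' x) x)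
    (hode : ∀ x ≤ 0, φ'' x = (kp + km) * φ' x - kp * km * φ x + φ x ^ 2)
    (hpos : ∀ x ≤ 0, 0 < φ x) (hlim : Tendsto φ atBot (𝓝 0)) {x₀ : ℝ} (hx₀ : x₀ ≤ 0)
    (hlt : φ' x₀ / φ x₀ < km) :
    ∃ ν > 0, (fun x => φ' x / φ x - km) =O[atBot] fun x => exp (ν * x) := by
  set v := fun x => φ' x / φ x
  have hvlt : ∀ x ≤ x₀, v x < km := logDeriv_lt_of_le_of_logDeriv_lt (k₂ := kp) hφ hφ'
    (fun x hx => by rw [hode x hx]; ring) hpos hx₀ hlt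
  have hσ : ∀ x ≤ x₀, HasDerivAt (fun y => km - v y) (-((kp - v x) * (v x - km) + φ x)) x :=
    fun x hx => (hasDerivAt_logDeriv hφ hφ' hode (hx.trans hx₀)
      (hpos x (hx.trans hx₀)).ne').const_sub km
  have hσ' : ∀ x ≤ x₀, (kp - km) * (km - v x) - φ x ≤ -((kp - v x) * (v x - km) + φ x) :=
    fun x hx => by nlinarith [hvlt x hx]
  obtain ⟨x₁, hx₁, hv₁⟩ := exists_forall_le_of_mul_sub_le_deriv (sub_pos.2 hk)
    (half_pos hkm) hσ hσ' hlim
  have hx₁0 : x₁ ≤ 0 := hx₁.trans hx₀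
  set μ := min (km / 2) ((kp - km) / 2)
  have hμ : 0 < μ := lt_min (half_pos hkm) (half_pos (sub_pos.2 hk))
  have hμq : μ < kp - km := (min_le_right _ _).trans_lt (half_lt_self (sub_pos.2 hk))
  -- `μ ≤ km / 2 ≤ v` makes `φ = O(e^{μ x})`, and `μ < kp - km` lets the Grönwall bound absorb it
  have hφ_le : ∀ x ≤ x₁, φ x ≤ φ x₁ * exp (-μ * x₁) * exp (μ * x) := by
    intro x hx
    have h := le_mul_exp_of_le_logDeriv (l := μ) (fun y hy => hφ y (hy.trans hx₁0))
      (fun y hy => hpos y (hy.trans hx₁0))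
      (fun y hy => (min_le_left _ _).trans (by simp only [v] at hv₁; linarith [hv₁ y hy])) x hx
    rwa [mul_assoc, ← exp_add, show -μ * x₁ + μ * x = μ * (x - x₁) by ring]
  have hbound := le_of_mul_sub_mul_exp_le_deriv hμq (fun x hx => hσ x (hx.trans hx₁))
    fun x hx => (sub_le_sub_left (hφ_le x hx) _).trans (hσ' x (hx.trans hx₁))
  set A := φ x₁ * exp (-μ * x₁) / (kp - km - μ)
  set K := km - v x₁ - A * exp (μ * x₁)
  refine ⟨μ, hμ, (IsBigO.of_norm_eventuallyLE
    (g := fun x => A * exp (μ * x) + K * exp ((kp - km) * (x - x₁))) ?_).trans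
    (((isBigO_refl _ _).const_mul_left A).add ((isBigO_exp_mul_sub x₁ hμq.le).const_mul_left K))⟩
  filter_upwards [eventually_le_atBot x₁] with x hx
  rw [norm_eq_abs, abs_of_neg (sub_neg.2 (hvlt x (hx.trans hx₁))), neg_sub]
  exact hbound x hx

theorem isBigO_logDeriv_sub_dichotomy (hkm : 0 < km) (hk : km < kp)
    (hφ : ∀ x ≤ 0, HasDerivAt φ (φ' x) x) (hφ' : ∀ x ≤ 0, HasDerivAt φ' (φ'' x) x)
    (hode : ∀ x ≤ 0, φ'' x = (kp + km) * φ' x - kp * km * φ x + φ x ^ 2)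
    (hpos : ∀ x ≤ 0, 0 < φ x) (hlim : Tendsto φ atBot (𝓝 0)) :
    ((fun x => φ' x / φ x - kp) =O[atBot] fun x => exp (kp * x)) ∨
      ∃ ν > 0, (fun x => φ' x / φ x - km) =O[atBot] fun x => exp (ν * x) := by
  by_cases hlow : ∃ x₀ ≤ 0, φ' x₀ / φ x₀ < km
  · obtain ⟨x₀, hx₀, hlt⟩ := hlow
    exact .inr (isBigO_logDeriv_sub_of_logDeriv_lt hkm hk hφ hφ' hode hpos hlim hx₀ hlt)
  push Not at hlow
  by_cases hmid : ∃ x₀ ≤ 0, φ' x₀ / φ x₀ < kp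
  · obtain ⟨x₀, hx₀, hlt⟩ := hmid
    exact .inr (isBigO_logDeriv_sub_of_le_of_lt hφ hφ' hode hpos hlow hx₀ hlt)
  push Not at hmid
  exact .inl (isBigO_logDeriv_sub_of_le_logDeriv hkm hk hφ hφ' hode hpos hmid)

end KPP

theorem kpp_decay_dichotomy_general (bU : ℝ) (hbU : 2 < bU) (φ : ℝ → ℝ)
    (hC : ContDiff ℝ 2 φ)
    (hode : ∀ x ≤ (0 : ℝ), -deriv (deriv φ) x + bU * deriv φ x = φ x - φ x ^ 2)
    (hrange : ∀ x ≤ (0 : ℝ), 0 < φ x ∧ φ x < 1)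
    (hlim : Tendsto φ atBot (nhds 0)) :
    (∃ c > (0 : ℝ),
      Tendsto (fun x => φ x / Real.exp ((bU + Real.sqrt (bU ^ 2 - 4)) / 2 * x))
        atBot (nhds c)) ∨
    (∃ c > (0 : ℝ),
      Tendsto (fun x => φ x / Real.exp ((bU - Real.sqrt (bU ^ 2 - 4)) / 2 * x))
        atBot (nhds c)) := by
  set q := √(bU ^ 2 - 4)
  have hq : 0 < q := sqrt_pos.2 (by nlinarith)
  have hqb : q < bU := (sqrt_lt' (by linarith)).2 (by nlinarith)
  have hq2 : q ^ 2 = bU ^ 2 - 4 := sq_sqrt (by nlinarith)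
  have hφ : ∀ x, HasDerivAt φ (deriv φ x) x := fun x =>
    (hC.differentiable (by norm_num) x).hasDerivAt
  have hφ' : ∀ x, HasDerivAt (deriv φ) (deriv (deriv φ) x) x := fun x =>
    ((by simpa using hC.differentiable_iteratedDeriv 1 (by norm_num) :
      Differentiable ℝ (deriv φ)) x).hasDerivAt
  have hode' : ∀ x ≤ 0, deriv (deriv φ) x = ((bU + q) / 2 + (bU - q) / 2) * deriv φ x -
      (bU + q) / 2 * ((bU - q) / 2) * φ x + φ x ^ 2 := fun x hx => by
    linear_combination -hode x hx - hq2 / 4 * φ x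
  rcases isBigO_logDeriv_sub_dichotomy (by linarith) (by linarith) (fun x _ => hφ x)
    (fun x _ => hφ' x) hode' (fun x hx => (hrange x hx).1) hlim with h | ⟨ν, hν, h⟩
  · exact .inl (exists_pos_tendsto_div_exp_of_isBigO (by linarith) (fun x _ => hφ x)
      (fun x hx => (hrange x hx).1) h)
  · exact .inr (exists_pos_tendsto_div_exp_of_isBigO hν (fun x _ => hφ x)
      (fun x hx => (hrange x hx).1) h)

/-- Decay dichotomy at `-∞` for positive monotone solutions of
`-φ'' + bU φ' = φ - φ²` decaying to 0, when `bU > 2`. -/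
theorem kpp_decay_dichotomy (bU : ℝ) (hbU : 2 < bU) (φ : ℝ → ℝ)
    (hC : ContDiff ℝ 2 φ)
    (hode : ∀ x ≤ (0 : ℝ), -deriv (deriv φ) x + bU * deriv φ x = φ x - φ x ^ 2)
    (hrange : ∀ x ≤ (0 : ℝ), 0 < φ x ∧ φ x < 1)
    (hlim : Tendsto φ atBot (nhds 0))
    (hmono : ∀ x ≤ (0 : ℝ), 0 < deriv φ x) :
    (∃ c > (0 : ℝ),
      Tendsto (fun x => φ x / Real.exp ((bU + Real.sqrt (bU ^ 2 - 4)) / 2 * x))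
        atBot (nhds c)) ∨
    (∃ c > (0 : ℝ),
      Tendsto (fun x => φ x / Real.exp ((bU - Real.sqrt (bU ^ 2 - 4)) / 2 * x))
        atBot (nhds c)) :=
  kpp_decay_dichotomy_general bU hbU φ hC hode hrange hlim
end

section
/- Let μ > 1/4. Then the system φ' = ψ, ψ' = ψ - μ(φ - φ²) has no trajectory (φ(x), ψ(x)) defined for all x ≤ 0 with 0 < φ(x) < 1 for all x < 0 and (φ(x), ψ(x)) → (0,0) as x → -∞. -/
/-!
The substitution `u = e^{-x/2} φ` removes the first-order term: `u'' + (μ(1 - φ) - 1/4) u = 0`.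
As `x → -∞` the coefficient tends to `μ - 1/4 > 0`, so far enough to the left it exceeds some
`ω² > 0`, and Sturm comparison with `sin (ω (x - a))` forces `u`, hence `φ`, to be nonpositive somewhere
in every interval of length `π / ω` there.
-/

open Real Filter Set

theorem exists_nonpos_of_hasDerivAt_of_sq_le {u v q : ℝ → ℝ} {a ω : ℝ} (hω : 0 < ω)
    (hu : ∀ x ∈ Icc a (a + π / ω), HasDerivAt u (v x) x)
    (hv : ∀ x ∈ Icc a (a + π / ω), HasDerivAt v (-(q x * u x)) x)
    (hq : ∀ x ∈ Ioo a (a + π / ω), ω ^ 2 ≤ q x) :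
    ∃ x ∈ Icc a (a + π / ω), u x ≤ 0 := by
  by_contra! hpos
  set b := a + π / ω
  have hab : a ≤ b := le_add_of_nonneg_right (div_pos pi_pos hω).le
  -- the Wronskian of `u` and `sin (ω (x - a))`
  set W : ℝ → ℝ := fun x => v x * sin (ω * (x - a)) - ω * u x * cos (ω * (x - a))
  have hW : ∀ x ∈ Icc a b, HasDerivAt W ((ω ^ 2 - q x) * u x * sin (ω * (x - a))) x := by
    intro x hx
    have hθ : HasDerivAt (fun y => ω * (y - a)) ω x := by
      simpa using ((hasDerivAt_id x).sub_const a).const_mul ω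
    exact (((hv x hx).mul hθ.sin).sub (((hu x hx).const_mul ω).mul hθ.cos)).congr_deriv (by ring)
  have hW_nonpos : ∀ x ∈ Ioo a b, (ω ^ 2 - q x) * u x * sin (ω * (x - a)) ≤ 0 := by
    intro x hx
    have hsin : 0 ≤ sin (ω * (x - a)) := by
      refine sin_nonneg_of_nonneg_of_le_pi (mul_nonneg hω.le (by linarith [hx.1])) ?_
      exact (le_div_iff₀' hω).1 (by linarith [hx.2])
    have hux := hpos x (Ioo_subset_Icc_self hx)
    exact mul_nonpos_of_nonpos_of_nonneg
      (mul_nonpos_of_nonpos_of_nonneg (by linarith [hq x hx]) hux.le) hsin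
  have hanti : AntitoneOn W (Icc a b) := by
    refine antitoneOn_of_hasDerivWithinAt_nonpos (convex_Icc a b)
      (f' := fun x => (ω ^ 2 - q x) * u x * sin (ω * (x - a)))
      (fun x hx => (hW x hx).continuousAt.continuousWithinAt) ?_ ?_ <;> rw [interior_Icc]
    · exact fun x hx => (hW x (Ioo_subset_Icc_self hx)).hasDerivWithinAt
    · exact hW_nonpos
  have hWab : W b ≤ W a := hanti (left_mem_Icc.2 hab) (right_mem_Icc.2 hab) hab
  have hWa : W a = -(ω * u a) := by simp [W]
  have hWb : W b = ω * u b := by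
    have hθ : ω * (b - a) = π := by rw [add_sub_cancel_left, mul_div_cancel₀ _ hω.ne']
    simp [W, hθ]
  have := mul_pos hω (hpos a (left_mem_Icc.2 hab))
  have := mul_pos hω (hpos b (right_mem_Icc.2 hab))
  linarith

theorem hasDerivAt_exp_neg_half (x : ℝ) :
    HasDerivAt (fun y : ℝ => exp (-y / 2)) (exp (-x / 2) * (-1 / 2)) x :=
  ((hasDerivAt_id x).neg.div_const 2).exp

section ExpNegHalf

variable {φ ψ : ℝ → ℝ} {x : ℝ}

theorem hasDerivAt_exp_neg_half_mul (hφ : HasDerivAt φ (ψ x) x) :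
    HasDerivAt (fun y => exp (-y / 2) * φ y) (exp (-x / 2) * (ψ x - φ x / 2)) x :=
  ((hasDerivAt_exp_neg_half x).mul hφ).congr_deriv (by ring)

theorem hasDerivAt_exp_neg_half_mul_sub_half {k : ℝ} (hφ : HasDerivAt φ (ψ x) x)
    (hψ : HasDerivAt ψ (ψ x - k * φ x) x) :
    HasDerivAt (fun y => exp (-y / 2) * (ψ y - φ y / 2))
      (-((k - 1 / 4) * (exp (-x / 2) * φ x))) x := by
  refine ((hasDerivAt_exp_neg_half x).mul (hψ.sub (hφ.div_const 2))).congr_deriv ?_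
  simp only [Pi.sub_apply]
  ring

end ExpNegHalf

/-- For `μ > 1/4` the origin is an unstable spiral: no trajectory of
`φ' = ψ, ψ' = ψ - μ(φ-φ²)` stays in the strip `0 < φ < 1` for all `x < 0` while
converging to `(0,0)` as `x → -∞`. -/
theorem spiral_no_positive_trajectory (μ : ℝ) (hμ : 1 / 4 < μ) :
    ¬ ∃ φ ψ : ℝ → ℝ,
      (∀ x ≤ (0 : ℝ), HasDerivAt φ (ψ x) x) ∧
      (∀ x ≤ (0 : ℝ), HasDerivAt ψ (ψ x - μ * (φ x - φ x ^ 2)) x) ∧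
      (∀ x < (0 : ℝ), 0 < φ x ∧ φ x < 1) ∧
      Tendsto φ atBot (nhds 0) ∧ Tendsto ψ atBot (nhds 0) := by
  rintro ⟨φ, ψ, hφ, hψ, hstrip, hφ0, -⟩
  set ω := √((μ - 1 / 4) / 2)
  have hω : 0 < ω := sqrt_pos.2 (by linarith)
  have hq : ∀ᶠ x in atBot, ω ^ 2 ≤ μ * (1 - φ x) - 1 / 4 := by
    have hlim : Tendsto (fun x => μ * (1 - φ x) - 1 / 4) atBot (nhds (μ - 1 / 4)) := by
      simpa using ((hφ0.const_sub 1).const_mul μ).sub_const (1 / 4)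
    rw [sq_sqrt (by linarith)]
    exact hlim.eventually_const_le (by linarith)
  obtain ⟨X, hX⟩ := eventually_atBot.1 hq
  set a := min X (-1) - π / ω
  have hX' : a + π / ω ≤ X := by simp [a]
  have hneg : a + π / ω < 0 := by
    simpa only [a, sub_add_cancel] using min_lt_of_right_lt (by norm_num : (-1 : ℝ) < 0)
  obtain ⟨x, hx, hux⟩ := exists_nonpos_of_hasDerivAt_of_sq_le hω
    (fun x hx => hasDerivAt_exp_neg_half_mul (hφ x (hx.2.trans hneg.le)))
    (fun x hx => hasDerivAt_exp_neg_half_mul_sub_half (k := μ * (1 - φ x))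
      (hφ x (hx.2.trans hneg.le)) ((hψ x (hx.2.trans hneg.le)).congr_deriv (by ring)))
    (fun x hx => hX x (hx.2.le.trans hX'))
  exact hux.not_gt (mul_pos (exp_pos _) (hstrip x (hx.2.trans_lt hneg)).1)
end

section
/- Let μ₁ > μ₂ > 0 and suppose Ψ₁, Ψ₂: (0,1) → (0,∞) are C¹ functions satisfying Ψᵢ'(φ) = 1 - μᵢ (φ - φ²)/Ψᵢ(φ) for φ ∈ (0,1), with Ψ₁(φ) > Ψ₂(φ) for φ near 0 and Ψ₁(φ) < Ψ₂(φ) for φ near 1. Then there is exactly one φ₀ ∈ (0,1) with Ψ₁(φ₀) = Ψ₂(φ₀); moreover Ψ₁ > Ψ₂ on (0, φ₀) and Ψ₁ < Ψ₂ on (φ₀, 1). -/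
/-!
At a common point of the two graphs their slopes differ by `(μ₂ - μ₁)(φ - φ²)/Ψ < 0`, so
`g = Ψ₁ - Ψ₂` crosses each of its zeros strictly downwards. A continuous function on an interval
with this property stays `≤ 0` after a zero (continuous induction to the right), and cannot vanish
again, since just before a later zero it would be positive. So `g` has at most one zero, positive
before it and negative after; the intermediate value theorem provides the zero.
-/

open Real Filter

open Set Topology

section DownwardCrossing

variable {g : ℝ → ℝ} {a b p : ℝ}

theorem eventually_neg_nhdsGT_of_deriv_neg (hd : deriv g p < 0) (hp : g p = 0) :
    ∀ᶠ x in 𝓝[>] p, g x < 0 := by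
  filter_upwards [nhdsWithin_le_nhds (eventually_nhdsWithin_sign_eq_of_deriv_neg hd hp),
    self_mem_nhdsWithin] with x hsign hx
  rwa [← sign_eq_neg_one_iff, hsign, sign_eq_neg_one_iff, sub_neg]

theorem eventually_pos_nhdsLT_of_deriv_neg (hd : deriv g p < 0) (hp : g p = 0) :
    ∀ᶠ x in 𝓝[<] p, 0 < g x := by
  filter_upwards [nhdsWithin_le_nhds (eventually_nhdsWithin_sign_eq_of_deriv_neg hd hp),
    self_mem_nhdsWithin] with x hsign hx
  rwa [← sign_eq_one_iff, hsign, sign_eq_one_iff, sub_pos]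

theorem neg_of_zero_of_lt_of_deriv_neg (hg : ContinuousOn g (Ioo a b))
    (hderiv : ∀ p ∈ Ioo a b, g p = 0 → deriv g p < 0) (hp : p ∈ Ioo a b) (hgp : g p = 0)
    {x : ℝ} (hpx : p < x) (hxb : x < b) : g x < 0 := by
  have hnonpos : Icc p x ⊆ {y | g y ≤ 0} := by
    refine IsClosed.Icc_subset_of_forall_mem_nhdsWithin ?_ hgp.le ?_
    · rw [inter_comm]
      exact (hg.mono (Icc_subset_Ioo hp.1 hxb)).preimage_isClosed_of_isClosed isClosed_Icc
        isClosed_Iic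
    · rintro y ⟨hgy, hy⟩
      have hy' : y ∈ Ioo a b := ⟨hp.1.trans_le hy.1, hy.2.trans hxb⟩
      rcases (show g y ≤ 0 from hgy).lt_or_eq with hneg | hzero
      · exact mem_nhdsWithin_of_mem_nhds <|
          (hg.continuousAt (isOpen_Ioo.mem_nhds hy')).eventually (gt_mem_nhds hneg) |>.mono
            fun _ => le_of_lt
      · exact (eventually_neg_nhdsGT_of_deriv_neg (hderiv y hy' hzero) hzero).mono
          fun _ => le_of_lt
  refine (hnonpos ⟨hpx.le, le_rfl⟩).lt_of_ne fun hgx => ?_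
  obtain ⟨y, hgy, hy⟩ := ((eventually_pos_nhdsLT_of_deriv_neg
    (hderiv x ⟨hp.1.trans hpx, hxb⟩ hgx) hgx).and (Ioo_mem_nhdsLT hpx)).exists
  exact (hnonpos (Ioo_subset_Icc_self hy)).not_gt hgy

theorem pos_of_lt_zero_of_deriv_neg (hg : ContinuousOn g (Ioo a b))
    (hderiv : ∀ p ∈ Ioo a b, g p = 0 → deriv g p < 0) (hp : p ∈ Ioo a b) (hgp : g p = 0)
    {x : ℝ} (hax : a < x) (hxp : x < p) : 0 < g x := by
  have hmaps : MapsTo Neg.neg (Ioo (-b) (-a)) (Ioo a b) := fun y hy =>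
    ⟨lt_neg_of_lt_neg hy.2, neg_lt_of_neg_lt hy.1⟩
  have hreflect : ∀ q ∈ Ioo (-b) (-a), -g (-q) = 0 → deriv (fun y => -g (-y)) q < 0 := by
    intro q hq hgq
    rw [deriv.fun_neg, deriv_comp_neg, neg_neg]
    exact hderiv (-q) (hmaps hq) (neg_eq_zero.mp hgq)
  simpa using neg_of_zero_of_lt_of_deriv_neg (hg.comp continuous_neg.continuousOn hmaps).neg
    hreflect (p := -p) ⟨neg_lt_neg hp.2, neg_lt_neg hp.1⟩ (by simp [hgp]) (neg_lt_neg hxp)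
    (neg_lt_neg hax)

theorem eq_of_zero_of_zero_of_deriv_neg (hg : ContinuousOn g (Ioo a b))
    (hderiv : ∀ p ∈ Ioo a b, g p = 0 → deriv g p < 0) {q : ℝ} (hp : p ∈ Ioo a b)
    (hq : q ∈ Ioo a b) (hgp : g p = 0) (hgq : g q = 0) : p = q := by
  rcases lt_trichotomy p q with hpq | rfl | hqp
  · exact absurd hgq (neg_of_zero_of_lt_of_deriv_neg hg hderiv hp hgp hpq hq.2).ne
  · rfl
  · exact absurd hgp (neg_of_zero_of_lt_of_deriv_neg hg hderiv hq hgq hqp hp.2).ne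

end DownwardCrossing

theorem trajectory_single_crossing_general (μ₁ μ₂ : ℝ) (hμ : μ₂ < μ₁)
    (Ψ₁ Ψ₂ : ℝ → ℝ)
    (hpos1 : ∀ φ ∈ Set.Ioo (0 : ℝ) 1, 0 < Ψ₁ φ)
    (hd1 : ∀ φ ∈ Set.Ioo (0 : ℝ) 1, HasDerivAt Ψ₁ (1 - μ₁ * (φ - φ ^ 2) / Ψ₁ φ) φ)
    (hd2 : ∀ φ ∈ Set.Ioo (0 : ℝ) 1, HasDerivAt Ψ₂ (1 - μ₂ * (φ - φ ^ 2) / Ψ₂ φ) φ)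
    (hnear0 : ∃ ε > (0 : ℝ), ∀ φ ∈ Set.Ioo (0 : ℝ) ε, Ψ₂ φ < Ψ₁ φ)
    (hnear1 : ∃ ε > (0 : ℝ), ∀ φ ∈ Set.Ioo (1 - ε) (1 : ℝ), Ψ₁ φ < Ψ₂ φ) :
    ∃ φ₀ ∈ Set.Ioo (0 : ℝ) 1, Ψ₁ φ₀ = Ψ₂ φ₀ ∧
      (∀ φ ∈ Set.Ioo (0 : ℝ) φ₀, Ψ₂ φ < Ψ₁ φ) ∧
      (∀ φ ∈ Set.Ioo φ₀ (1 : ℝ), Ψ₁ φ < Ψ₂ φ) ∧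
      (∀ φ ∈ Set.Ioo (0 : ℝ) 1, Ψ₁ φ = Ψ₂ φ → φ = φ₀) := by
  set g : ℝ → ℝ := fun φ => Ψ₁ φ - Ψ₂ φ
  have hg : ContinuousOn g (Ioo 0 1) := fun φ hφ =>
    ((hd1 φ hφ).continuousAt.sub (hd2 φ hφ).continuousAt).continuousWithinAt
  have hderiv : ∀ p ∈ Ioo (0 : ℝ) 1, g p = 0 → deriv g p < 0 := by
    intro p hp hgp
    rw [((hd1 p hp).fun_sub (hd2 p hp)).deriv, ← sub_eq_zero.mp hgp, sub_sub_sub_cancel_left,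
      sub_neg]
    have hf : 0 < p - p ^ 2 := by nlinarith [hp.1, hp.2]
    gcongr
    exact hpos1 p hp
  obtain ⟨ε₀, hε₀, h0⟩ := hnear0
  obtain ⟨ε₁, hε₁, h1⟩ := hnear1
  obtain ⟨x, hx0, hx⟩ := exists_between (lt_min hε₀ one_pos)
  obtain ⟨y, hy, hy1⟩ := exists_between (max_lt (sub_lt_self 1 hε₁) one_pos)
  obtain ⟨φ₀, hφ₀, hgφ₀⟩ : ∃ φ₀ ∈ Ioo (0 : ℝ) 1, g φ₀ = 0 :=
    isPreconnected_Ioo.intermediate_value ⟨(le_max_right _ _).trans_lt hy, hy1⟩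
      ⟨hx0, hx.trans_le (min_le_right _ _)⟩ hg
      ⟨(sub_neg.mpr (h1 y ⟨(le_max_left _ _).trans_lt hy, hy1⟩)).le,
        (sub_pos.mpr (h0 x ⟨hx0, hx.trans_le (min_le_left _ _)⟩)).le⟩
  refine ⟨φ₀, hφ₀, sub_eq_zero.mp hgφ₀, fun φ hφ => ?_, fun φ hφ => ?_, fun φ hφ hΨ => ?_⟩
  · exact sub_pos.mp (pos_of_lt_zero_of_deriv_neg hg hderiv hφ₀ hgφ₀ hφ.1 hφ.2)
  · exact sub_neg.mp (neg_of_zero_of_lt_of_deriv_neg hg hderiv hφ₀ hgφ₀ hφ.1 hφ.2)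
  · exact eq_of_zero_of_zero_of_deriv_neg hg hderiv hφ hφ₀ (sub_eq_zero.mpr hΨ) hgφ₀

/-- Two phase-plane trajectory graphs `ψ = Ψᵢ(φ)` with slopes
`Ψᵢ' = 1 - μᵢ(φ-φ²)/Ψᵢ`, `μ₁ > μ₂ > 0`, with `Ψ₁ > Ψ₂` near 0 and `Ψ₁ < Ψ₂` near 1,
cross exactly once. -/
theorem trajectory_single_crossing (μ₁ μ₂ : ℝ) (hμ2 : 0 < μ₂) (hμ : μ₂ < μ₁)
    (Ψ₁ Ψ₂ : ℝ → ℝ)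
    (hpos1 : ∀ φ ∈ Set.Ioo (0 : ℝ) 1, 0 < Ψ₁ φ)
    (hpos2 : ∀ φ ∈ Set.Ioo (0 : ℝ) 1, 0 < Ψ₂ φ)
    (hd1 : ∀ φ ∈ Set.Ioo (0 : ℝ) 1, HasDerivAt Ψ₁ (1 - μ₁ * (φ - φ ^ 2) / Ψ₁ φ) φ)
    (hd2 : ∀ φ ∈ Set.Ioo (0 : ℝ) 1, HasDerivAt Ψ₂ (1 - μ₂ * (φ - φ ^ 2) / Ψ₂ φ) φ)
    (hnear0 : ∃ ε > (0 : ℝ), ∀ φ ∈ Set.Ioo (0 : ℝ) ε, Ψ₂ φ < Ψ₁ φ)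
    (hnear1 : ∃ ε > (0 : ℝ), ∀ φ ∈ Set.Ioo (1 - ε) (1 : ℝ), Ψ₁ φ < Ψ₂ φ) :
    ∃ φ₀ ∈ Set.Ioo (0 : ℝ) 1, Ψ₁ φ₀ = Ψ₂ φ₀ ∧
      (∀ φ ∈ Set.Ioo (0 : ℝ) φ₀, Ψ₂ φ < Ψ₁ φ) ∧
      (∀ φ ∈ Set.Ioo φ₀ (1 : ℝ), Ψ₁ φ < Ψ₂ φ) ∧
      (∀ φ ∈ Set.Ioo (0 : ℝ) 1, Ψ₁ φ = Ψ₂ φ → φ = φ₀) :=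
  trajectory_single_crossing_general μ₁ μ₂ hμ Ψ₁ Ψ₂ hpos1 hd1 hd2 hnear0 hnear1
end

section
/- Let β_U ≥ 2 > β_L > 0 with a_L β_L = a_U β_U, and let (φ₁, φ₂) and (ψ₁, ψ₂) be two solutions of the two-branch stationary junction problem, both with strictly positive components, both satisfying φ₂(x), ψ₂(x) = O(e^{k x}) as x → -∞ with k = ½(β_U + √(β_U² - 4)), and with junction values α₁ ≤ α₂ respectively. If for M* := inf{M > 0 : M(φ₁,φ₂) ≥ (ψ₁,ψ₂) componentwise} one has M* > 1, then a contradiction arises; consequently α₁ = α₂, i.e. two such 'fast-decaying' solutions must have the same junction value. -/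
/-!
On each branch a positive solution is determined by its junction value: for two solutions `u`,
`w` of `-u'' + β u' = u - u²` the weighted Wronskian `(w' u - w u') e^{-βx}` has derivative
`e^{-βx} u w (w - u)`, so it is strictly monotone wherever `u < w`. This excludes two consecutive
crossings of `u` and `w`, and a last crossing as well: towards `-∞` on the upper branch because of
the decay `O(e^{kx})` with `2k ≥ β_U`, towards `+∞` on the lower branch because `u ≤ 1`.

Hence if `α₁ < α₂`, the upper profiles are translates of each other, and so are the lower ones.
Follow the lower profile `v` for the time it takes to rise from `α₁` to `α₂`, and let `Y` invert
the upper profile `u`. Both Kirchhoff conditions then say that the flux difference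
`G = a_U u'(Y (v x)) - a_L v'(x)` vanishes at the two ends. But `a_U < a_L` and
`a_L β_L = a_U β_U` give `G' > 0` at every zero of `G`, which is a contradiction. So `α₁ = α₂`,
the two solutions coincide, and `M = 1` is admissible.
-/

open Real Filter

open Set Topology

section Calculus

variable {f : ℝ → ℝ} {a c : ℝ}

theorem HasDerivAt.nonpos_of_nonneg_left {f'₀ x : ℝ} (hf : HasDerivAt f f'₀ x)
    (hx : f x = 0) (hpos : ∀ᶠ y in 𝓝[<] x, 0 ≤ f y) : f'₀ ≤ 0 := by
  have hslope := (hasDerivWithinAt_iff_tendsto_slope' self_notMem_Iio).1 hf.hasDerivWithinAt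
  refine le_of_tendsto hslope ?_
  filter_upwards [hpos, self_mem_nhdsWithin] with y hy hyx
  rw [slope_def_field, hx, sub_zero]
  exact div_nonpos_of_nonneg_of_nonpos hy (sub_nonpos.2 (le_of_lt hyx))

theorem HasDerivAt.nonneg_of_nonneg_right {f'₀ x : ℝ} (hf : HasDerivAt f f'₀ x)
    (hx : f x = 0) (hpos : ∀ᶠ y in 𝓝[>] x, 0 ≤ f y) : 0 ≤ f'₀ := by
  have hslope := (hasDerivWithinAt_iff_tendsto_slope' self_notMem_Ioi).1 hf.hasDerivWithinAt
  refine ge_of_tendsto hslope ?_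
  filter_upwards [hpos, self_mem_nhdsWithin] with y hy hyx
  rw [slope_def_field, hx, sub_zero]
  exact div_nonneg hy (sub_nonneg.2 (le_of_lt hyx))

theorem pos_of_deriv_pos_at_zeros {f' : ℝ → ℝ} {b : ℝ} (hab : a < b)
    (hf : ∀ x ∈ Icc a b, HasDerivAt f (f' x) x) (hf' : ∀ x ∈ Icc a b, f x = 0 → 0 < f' x)
    (ha : 0 ≤ f a) : 0 < f b := by
  have hnonneg : ∀ x ∈ Icc a b, 0 ≤ f x := by
    have := image_le_of_deriv_right_lt_deriv_boundary (f := fun x => -f x)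
      (f' := fun x => -f' x) (B := fun _ => 0) (B' := fun _ => 0)
      (fun x hx => (hf x hx).continuousAt.neg.continuousWithinAt)
      (fun x hx => (hf x (Ico_subset_Icc_self hx)).neg.hasDerivWithinAt) (by simpa using ha)
      (fun _ => hasDerivAt_const _ _)
      (fun x hx hx0 => by simpa using hf' x (Ico_subset_Icc_self hx) (by simpa using hx0))
    exact fun x hx => by simpa using this hx
  refine (hnonneg b (right_mem_Icc.2 hab.le)).lt_of_ne' fun hb => ?_
  have hb' := hf' b (right_mem_Icc.2 hab.le) hb
  refine hb'.not_ge ((hf b (right_mem_Icc.2 hab.le)).nonpos_of_nonneg_left hb ?_)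
  filter_upwards [Ioo_mem_nhdsLT hab] with y hy using hnonneg y (Ioo_subset_Icc_self hy)

theorem exists_neg_of_deriv_le_neg {f' : ℝ → ℝ} (hc : 0 < c) (hf : ∀ x ≥ a, HasDerivAt f (f' x) x)
    (hf' : ∀ x ≥ a, f' x ≤ -c) : ∃ x ≥ a, f x < 0 := by
  rcases lt_or_ge (f a) 0 with ha | ha
  · exact ⟨a, le_rfl, ha⟩
  set x := a + f a / c + 1
  have hax : a < x := by have := div_nonneg ha hc.le; linarith
  obtain ⟨ξ, hξ, hslope⟩ := exists_hasDerivAt_eq_slope f f' hax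
    (fun y hy => (hf y hy.1).continuousAt.continuousWithinAt) (fun y hy => hf y hy.1.le)
  have hle : (f x - f a) / (x - a) ≤ -c := hslope ▸ hf' ξ hξ.1.le
  rw [div_le_iff₀ (sub_pos.2 hax)] at hle
  refine ⟨x, hax.le, ?_⟩
  have : c * (x - a) = f a + c := by simp only [x]; field_simp; ring
  nlinarith

theorem exists_neg_of_le_deriv {f' : ℝ → ℝ} (hc : 0 < c) (hf : ∀ x ≤ a, HasDerivAt f (f' x) x)
    (hf' : ∀ x ≤ a, c ≤ f' x) : ∃ x ≤ a, f x < 0 := by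
  obtain ⟨x, hx, hfx⟩ := exists_neg_of_deriv_le_neg (f := fun x => f (-x))
    (f' := fun x => -f' (-x)) (a := -a) hc (fun x hx => by
      simpa [Function.comp_def] using (hf (-x) (by linarith)).comp x (hasDerivAt_neg x))
    (fun x hx => neg_le_neg (hf' (-x) (by linarith)))
  exact ⟨-x, by linarith, hfx⟩

theorem deriv_eq_of_eqOn {g : ℝ → ℝ} {s : Set ℝ} {x : ℝ} (hs : UniqueDiffWithinAt ℝ s x)
    (hx : x ∈ s) (hf : DifferentiableAt ℝ f x) (hg : DifferentiableAt ℝ g x) (h : EqOn f g s) :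
    deriv f x = deriv g x := by
  rw [← hf.derivWithin hs, ← hg.derivWithin hs, derivWithin_congr h (h hx)]

theorem exists_first_zero {z : ℝ → ℝ} (hz : Continuous z) {q r : ℝ} (hzq : 0 < z q)
    (hqr : q ≤ r) (hzr : z r = 0) : ∃ x₀ ∈ Ioc q r, z x₀ = 0 ∧ ∀ x ∈ Ico q x₀, 0 < z x := by
  have hK : IsCompact (Icc q r ∩ z ⁻¹' {0}) :=
    isCompact_Icc.inter_right (isClosed_singleton.preimage hz)
  obtain ⟨x₀, ⟨⟨hqx₀, hx₀r⟩, hzx₀⟩, hleast⟩ := hK.exists_isLeast ⟨r, right_mem_Icc.2 hqr, hzr⟩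
  have hx₀ : q < x₀ := hqx₀.lt_of_ne (by rintro rfl; exact hzq.ne' hzx₀)
  refine ⟨x₀, ⟨hx₀, hx₀r⟩, hzx₀, fun x hx => ?_⟩
  by_contra! hzx
  obtain ⟨y, hy, hzy⟩ := intermediate_value_Icc' hx.1 hz.continuousOn ⟨hzx, hzq.le⟩
  have := hleast ⟨⟨hy.1, hy.2.trans (hx.2.le.trans hx₀r)⟩, hzy⟩
  linarith [hy.2, hx.2]

theorem exists_last_zero_or_forall_pos {z : ℝ → ℝ} (hz : Continuous z) {q : ℝ} (hzq : 0 < z q) :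
    (∃ p < q, z p = 0 ∧ ∀ x ∈ Ioc p q, 0 < z x) ∨ ∀ x ≤ q, 0 < z x := by
  by_cases h : ∃ r ≤ q, z r = 0
  · obtain ⟨r, hrq, hzr⟩ := h
    obtain ⟨x₀, hx₀, hzx₀, hpos⟩ := exists_first_zero (z := fun x => z (-x))
      (hz.comp continuous_neg) (by simpa using hzq) (neg_le_neg hrq) (by simpa using hzr)
    refine .inl ⟨-x₀, by linarith [hx₀.1], hzx₀, fun x hx => ?_⟩
    simpa using hpos (-x) ⟨by linarith [hx.2], by linarith [hx.1]⟩
  · push Not at h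
    refine .inr fun x hx => ?_
    by_contra! hzx
    obtain ⟨y, hy, hzy⟩ := intermediate_value_Icc hx hz.continuousOn ⟨hzx, hzq.le⟩
    exact h y hy.2 hzy

end Calculus

def FisherKPPOn (b : ℝ) (f : ℝ → ℝ) (s : Set ℝ) : Prop :=
  ∀ x ∈ s, -deriv (deriv f) x + b * deriv f x = f x - f x ^ 2

namespace FisherKPPOn

variable {b : ℝ} {f : ℝ → ℝ} {s t : Set ℝ}

theorem mono (h : FisherKPPOn b f s) (hts : t ⊆ s) : FisherKPPOn b f t :=
  fun x hx => h x (hts hx)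

protected theorem closure (hf : ContDiff ℝ 2 f) (h : FisherKPPOn b f s) :
    FisherKPPOn b f (closure s) :=
  EqOn.closure h ((hf.deriv'.continuous_deriv_one.neg).add
      (continuous_const.mul (hf.continuous_deriv (by norm_num))))
    (hf.continuous.sub (hf.continuous.pow 2))

theorem comp_add_const (h : FisherKPPOn b f s) (c : ℝ) :
    FisherKPPOn b (fun x => f (x + c)) ((· + c) ⁻¹' s) := by
  intro x hx
  have hd : deriv (fun x => f (x + c)) = fun x => deriv f (x + c) :=
    funext fun x => deriv_comp_add_const f c x
  rw [hd, deriv_comp_add_const (deriv f) c x]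
  exact h _ hx

theorem comp_neg (h : FisherKPPOn b f s) : FisherKPPOn (-b) (fun x => f (-x)) (-s) := by
  intro x hx
  have hd : deriv (fun x => f (-x)) = fun x => -deriv f (-x) :=
    funext fun x => deriv_comp_neg f x
  rw [hd, deriv.fun_neg, deriv_comp_neg (deriv f) x]
  have := h _ hx
  simp only at this ⊢
  linarith

theorem hasDerivAt_exp_mul_deriv (hf : ContDiff ℝ 2 f) (h : FisherKPPOn b f s) {x : ℝ}
    (hx : x ∈ s) :
    HasDerivAt (fun t => exp (-b * t) * deriv f t) (exp (-b * x) * (f x ^ 2 - f x)) x := by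
  have hexp : HasDerivAt (fun t => exp (-b * t)) (exp (-b * x) * -b) x := by
    simpa using ((hasDerivAt_id x).const_mul (-b)).exp
  refine (hexp.mul (hf.differentiable_deriv_two x).hasDerivAt).congr_deriv ?_
  linear_combination -exp (-b * x) * h x hx

theorem strictAntiOn_exp_mul_deriv (hf : ContDiff ℝ 2 f) (hs : Convex ℝ s)
    (h : FisherKPPOn b f (interior s)) (h01 : ∀ x ∈ interior s, 0 < f x ∧ f x < 1) :
    StrictAntiOn (fun t => exp (-b * t) * deriv f t) s := by
  have hcont : Continuous fun t => exp (-b * t) * deriv f t :=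
    (by fun_prop : Continuous fun t => exp (-b * t)).mul (hf.continuous_deriv (by norm_num))
  refine strictAntiOn_of_deriv_neg hs hcont.continuousOn fun x hx => ?_
  rw [(h.hasDerivAt_exp_mul_deriv hf hx).deriv]
  have := h01 x hx
  exact mul_neg_of_pos_of_neg (exp_pos _) (by nlinarith)

/-- Otherwise the damped slope `e^{-bx} f'` stays below a negative constant from some point
on, hence so does `f'`. -/
theorem deriv_pos_of_Ioi (hb : 0 ≤ b) (hf : ContDiff ℝ 2 f) (h : FisherKPPOn b f (Ioi 0))
    (h01 : ∀ x > 0, 0 < f x ∧ f x < 1) : ∀ x ≥ 0, 0 < deriv f x := by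
  have hanti := strictAntiOn_exp_mul_deriv hf (convex_Ici 0) (by rwa [interior_Ici])
    (by rwa [interior_Ici])
  intro x₀ hx₀
  by_contra! hneg
  set γ := exp (-b * (x₀ + 1)) * deriv f (x₀ + 1)
  have hγ : γ < 0 := by
    have := hanti (mem_Ici.2 hx₀) (mem_Ici.2 (by linarith)) (lt_add_one x₀)
    nlinarith [exp_pos (-b * x₀)]
  have hbound : ∀ x ≥ x₀ + 1, deriv f x ≤ γ := by
    intro x hx
    have hle : exp (-b * x) * deriv f x ≤ γ :=
      hanti.antitoneOn (mem_Ici.2 (by linarith)) (mem_Ici.2 (by linarith)) hx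
    have h1 : 1 ≤ exp (b * x) := one_le_exp (by nlinarith)
    have h2 : exp (b * x) * exp (-b * x) = 1 := by rw [← exp_add]; simp
    nlinarith
  obtain ⟨x, hx, hfx⟩ := exists_neg_of_deriv_le_neg (neg_pos.2 hγ)
    (fun x _ => (hf.differentiable (by norm_num) x).hasDerivAt) (by simpa using hbound)
  exact hfx.not_gt (h01 x (by linarith)).1

theorem deriv_pos_of_Iio (hf : ContDiff ℝ 2 f) (h : FisherKPPOn b f (Iio 0))
    (h01 : ∀ x < 0, 0 < f x ∧ f x < 1) (h0 : 0 < deriv f 0) : ∀ x ≤ 0, 0 < deriv f x := by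
  have hanti := strictAntiOn_exp_mul_deriv hf (convex_Iic 0) (by rwa [interior_Iic])
    (by rwa [interior_Iic])
  intro x hx
  have := hanti.antitoneOn (mem_Iic.2 hx) (mem_Iic.2 le_rfl) hx
  simp only [mul_zero, exp_zero, one_mul] at this
  exact pos_of_mul_pos_right (h0.trans_le this) (exp_pos _).le

end FisherKPPOn

noncomputable def weightedWronskian (b : ℝ) (u w : ℝ → ℝ) (x : ℝ) : ℝ :=
  (deriv w x * u x - w x * deriv u x) * exp (-b * x)

section Wronskian

variable {b : ℝ} {u w : ℝ → ℝ} {s : Set ℝ}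

theorem hasDerivAt_weightedWronskian (hu : ContDiff ℝ 2 u) (hw : ContDiff ℝ 2 w)
    (hu_ode : FisherKPPOn b u s) (hw_ode : FisherKPPOn b w s) {x : ℝ} (hx : x ∈ s) :
    HasDerivAt (weightedWronskian b u w) (exp (-b * x) * (u x * w x * (w x - u x))) x := by
  have hu' := (hu.differentiable (by norm_num) x).hasDerivAt
  have hw' := (hw.differentiable (by norm_num) x).hasDerivAt
  have hu'' := (hu.differentiable_deriv_two x).hasDerivAt
  have hw'' := (hw.differentiable_deriv_two x).hasDerivAt
  have hexp : HasDerivAt (fun t => exp (-b * t)) (exp (-b * x) * -b) x := by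
    simpa using ((hasDerivAt_id x).const_mul (-b)).exp
  refine (((hw''.mul hu').sub (hw'.mul hu'')).mul hexp).congr_deriv ?_
  simp only [Pi.mul_apply, Pi.sub_apply]
  linear_combination exp (-b * x) * (w x * hu_ode x hx - u x * hw_ode x hx)

theorem continuous_weightedWronskian (hu : ContDiff ℝ 2 u) (hw : ContDiff ℝ 2 w) :
    Continuous (weightedWronskian b u w) := by
  have := hu.continuous_deriv (by norm_num)
  have := hw.continuous_deriv (by norm_num)
  unfold weightedWronskian
  fun_prop

theorem strictMonoOn_weightedWronskian (hu : ContDiff ℝ 2 u) (hw : ContDiff ℝ 2 w)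
    (hs : Convex ℝ s) (hu_ode : FisherKPPOn b u (interior s))
    (hw_ode : FisherKPPOn b w (interior s)) (hlt : ∀ x ∈ interior s, 0 < u x ∧ u x < w x) :
    StrictMonoOn (weightedWronskian b u w) s := by
  refine strictMonoOn_of_deriv_pos hs (continuous_weightedWronskian hu hw).continuousOn
    fun x hx => ?_
  rw [(hasDerivAt_weightedWronskian hu hw hu_ode hw_ode hx).deriv]
  obtain ⟨hu0, huw⟩ := hlt x hx
  have := mul_pos hu0 (hu0.trans huw)
  exact mul_pos (exp_pos _) (mul_pos this (sub_pos.2 huw))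

theorem weightedWronskian_eq_of_eq (hu : ContDiff ℝ 2 u) (hw : ContDiff ℝ 2 w) {x : ℝ}
    (hx : u x = w x) :
    weightedWronskian b u w x = u x * deriv (fun t => w t - u t) x * exp (-b * x) := by
  rw [weightedWronskian, deriv_fun_sub (hw.differentiable (by norm_num) x)
    (hu.differentiable (by norm_num) x), hx]
  ring

theorem weightedWronskian_nonpos_of_lt_left (hu : ContDiff ℝ 2 u) (hw : ContDiff ℝ 2 w) {x : ℝ}
    (hx : u x = w x) (hux : 0 ≤ u x) (hlt : ∀ᶠ y in 𝓝[<] x, u y < w y) :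
    weightedWronskian b u w x ≤ 0 := by
  have hz := ((hw.differentiable (by norm_num) x).sub
    (hu.differentiable (by norm_num) x)).hasDerivAt.nonpos_of_nonneg_left (by simp [hx])
    (hlt.mono fun y hy => (sub_pos.2 hy).le)
  rw [weightedWronskian_eq_of_eq hu hw hx]
  exact mul_nonpos_of_nonpos_of_nonneg (mul_nonpos_of_nonneg_of_nonpos hux hz) (exp_pos _).le

theorem weightedWronskian_nonneg_of_lt_right (hu : ContDiff ℝ 2 u) (hw : ContDiff ℝ 2 w) {x : ℝ}
    (hx : u x = w x) (hux : 0 ≤ u x) (hlt : ∀ᶠ y in 𝓝[>] x, u y < w y) :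
    0 ≤ weightedWronskian b u w x := by
  have hz := ((hw.differentiable (by norm_num) x).sub
    (hu.differentiable (by norm_num) x)).hasDerivAt.nonneg_of_nonneg_right (by simp [hx])
    (hlt.mono fun y hy => (sub_pos.2 hy).le)
  rw [weightedWronskian_eq_of_eq hu hw hx]
  exact mul_nonneg (mul_nonneg hux hz) (exp_pos _).le

/-- Here `(u / w)' = -e^{bx} T / w² ≥ δ / C` for the weighted Wronskian `T`, so `u / w` cannot
stay positive. -/
theorem false_of_weightedWronskian_le_neg {C δ x₁ : ℝ} (hu : ContDiff ℝ 2 u)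
    (hw : ContDiff ℝ 2 w) (hδ : 0 < δ) (hu_pos : ∀ x ≤ x₁, 0 < u x) (hw_pos : ∀ x ≤ x₁, 0 < w x)
    (hw_sq : ∀ x ≤ x₁, w x ^ 2 ≤ C * exp (b * x))
    (hT : ∀ x ≤ x₁, weightedWronskian b u w x ≤ -δ) : False := by
  have hC : 0 < C := by
    have := (pow_pos (hw_pos x₁ le_rfl) 2).trans_le (hw_sq x₁ le_rfl)
    exact pos_of_mul_pos_left this (exp_pos _).le
  have hderiv : ∀ x ≤ x₁, HasDerivAt (fun t => u t / w t)
      ((deriv u x * w x - u x * deriv w x) / w x ^ 2) x := fun x hx =>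
    (hu.differentiable (by norm_num) x).hasDerivAt.div
      (hw.differentiable (by norm_num) x).hasDerivAt (hw_pos x hx).ne'
  obtain ⟨x, hx, hneg⟩ := exists_neg_of_le_deriv (div_pos hδ hC) hderiv fun x hx => by
    have hTx := hT x hx
    rw [weightedWronskian] at hTx
    have hnum : δ * exp (b * x) ≤ deriv u x * w x - u x * deriv w x := by
      have h1 : exp (-b * x) * exp (b * x) = 1 := by rw [← exp_add]; simp
      have h2 := mul_le_mul_of_nonneg_right hTx (exp_pos (b * x)).le
      rw [mul_assoc, h1, mul_one] at h2
      linarith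
    rw [div_le_div_iff₀ hC (pow_pos (hw_pos x hx) 2)]
    nlinarith [hw_sq x hx, exp_pos (b * x)]
  exact hneg.not_gt (div_pos (hu_pos x hx) (hw_pos x hx))

end Wronskian

section Uniqueness

variable {b : ℝ} {u w : ℝ → ℝ}

theorem false_of_lt_of_eq_of_eq {p r : ℝ} (hu : ContDiff ℝ 2 u) (hw : ContDiff ℝ 2 w)
    (hu_ode : FisherKPPOn b u (Ioo p r)) (hw_ode : FisherKPPOn b w (Ioo p r)) (hpr : p < r)
    (hu_pos : ∀ x ∈ Icc p r, 0 < u x) (hp : u p = w p) (hr : u r = w r)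
    (hlt : ∀ x ∈ Ioo p r, u x < w x) : False := by
  have hmono : StrictMonoOn (weightedWronskian b u w) (Icc p r) := by
    refine strictMonoOn_weightedWronskian hu hw (convex_Icc p r) ?_ ?_ ?_ <;> rw [interior_Icc]
    exacts [hu_ode, hw_ode, fun x hx => ⟨hu_pos x (Ioo_subset_Icc_self hx), hlt x hx⟩]
  have hTp : 0 ≤ weightedWronskian b u w p :=
    weightedWronskian_nonneg_of_lt_right hu hw hp (hu_pos p (left_mem_Icc.2 hpr.le)).le <| by
      filter_upwards [Ioo_mem_nhdsGT hpr] with x hx using hlt x hx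
  have hTr : weightedWronskian b u w r ≤ 0 :=
    weightedWronskian_nonpos_of_lt_left hu hw hr (hu_pos r (right_mem_Icc.2 hpr.le)).le <| by
      filter_upwards [Ioo_mem_nhdsLT hpr] with x hx using hlt x hx
  exact (hmono (left_mem_Icc.2 hpr.le) (right_mem_Icc.2 hpr.le) hpr).not_ge (hTr.trans hTp)

/-- Let `x₀` be the first zero of `w - u` to the right of `q`. A zero to the left of `q` is
excluded by `false_of_lt_of_eq_of_eq`. Without one, the weighted Wronskian increases on
`(-∞, x₀]` to a value `≤ 0`, so it stays below a negative constant on `(-∞, x₀ - 1]`, which the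
decay of `w` forbids. -/
theorem false_of_lt_of_sq_le_exp {C q : ℝ} (hu : ContDiff ℝ 2 u) (hw : ContDiff ℝ 2 w)
    (hu_ode : FisherKPPOn b u (Iio 0)) (hw_ode : FisherKPPOn b w (Iio 0))
    (hu_pos : ∀ x ≤ 0, 0 < u x) (hw_pos : ∀ x ≤ 0, 0 < w x)
    (hw_sq : ∀ x ≤ 0, w x ^ 2 ≤ C * exp (b * x)) (h0 : u 0 = w 0) (hq : q ≤ 0)
    (hlt : u q < w q) : False := by
  have hz : Continuous fun x => w x - u x := hw.continuous.sub hu.continuous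
  obtain ⟨x₀, ⟨hqx₀, hx₀⟩, hzx₀, hright⟩ :=
    exists_first_zero hz (sub_pos.2 hlt) hq (by simp [h0])
  have hux₀ : u x₀ = w x₀ := (sub_eq_zero.1 hzx₀).symm
  have hu_ode' := hu_ode.mono (Iio_subset_Iio hx₀)
  have hw_ode' := hw_ode.mono (Iio_subset_Iio hx₀)
  rcases exists_last_zero_or_forall_pos hz (sub_pos.2 hlt) with ⟨p, hpq, hzp, hleft⟩ | hleft
  · refine false_of_lt_of_eq_of_eq hu hw (hu_ode'.mono Ioo_subset_Iio_self)
      (hw_ode'.mono Ioo_subset_Iio_self) (hpq.trans hqx₀) (fun x hx => hu_pos x (hx.2.trans hx₀))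
      (sub_eq_zero.1 hzp).symm hux₀ fun x hx => sub_pos.1 ?_
    exact (le_or_gt x q).elim (fun h => hleft x ⟨hx.1, h⟩) fun h => hright x ⟨h.le, hx.2⟩
  have hlt' : ∀ x < x₀, u x < w x := fun x hx => sub_pos.1 <|
    (le_or_gt x q).elim (hleft x) fun h => hright x ⟨h.le, hx⟩
  have hmono : StrictMonoOn (weightedWronskian b u w) (Iic x₀) := by
    refine strictMonoOn_weightedWronskian hu hw (convex_Iic x₀) ?_ ?_ ?_ <;> rw [interior_Iic]
    exacts [hu_ode', hw_ode', fun x hx => ⟨hu_pos x (hx.le.trans hx₀), hlt' x hx⟩]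
  have hT₀ : weightedWronskian b u w x₀ ≤ 0 :=
    weightedWronskian_nonpos_of_lt_left hu hw hux₀ (hu_pos x₀ hx₀).le <| by
      filter_upwards [self_mem_nhdsWithin] with x hx using hlt' x hx
  have hδ : 0 < -weightedWronskian b u w (x₀ - 1) := by
    linarith [hmono (mem_Iic.2 (by linarith)) (mem_Iic.2 le_rfl) (sub_one_lt x₀)]
  refine false_of_weightedWronskian_le_neg (x₁ := x₀ - 1) hu hw hδ
    (fun x hx => hu_pos x (by linarith)) (fun x hx => hw_pos x (by linarith))
    (fun x hx => hw_sq x (by linarith)) fun x hx => ?_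
  rw [neg_neg]
  exact hmono.monotoneOn (mem_Iic.2 (by linarith)) (mem_Iic.2 (by linarith)) hx

theorem eqOn_Iic_of_sq_le_exp {C₁ C₂ : ℝ} (hu : ContDiff ℝ 2 u) (hw : ContDiff ℝ 2 w)
    (hu_ode : FisherKPPOn b u (Iio 0)) (hw_ode : FisherKPPOn b w (Iio 0))
    (hu_pos : ∀ x ≤ 0, 0 < u x) (hw_pos : ∀ x ≤ 0, 0 < w x)
    (hu_sq : ∀ x ≤ 0, u x ^ 2 ≤ C₁ * exp (b * x)) (hw_sq : ∀ x ≤ 0, w x ^ 2 ≤ C₂ * exp (b * x))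
    (h0 : u 0 = w 0) : EqOn u w (Iic 0) := fun x hx =>
  (lt_trichotomy (u x) (w x)).elim
    (fun h => (false_of_lt_of_sq_le_exp hu hw hu_ode hw_ode hu_pos hw_pos hw_sq h0 hx h).elim)
    fun h => h.elim id fun h =>
      (false_of_lt_of_sq_le_exp hw hu hw_ode hu_ode hw_pos hu_pos hu_sq h0.symm hx h).elim

/-- On the right half-line, `x ↦ -x` turns the coefficient into `-b ≤ 0`, and then the bound
`u ≤ 1` is a decay bound of the required kind. -/
theorem eqOn_Ici_of_le_one (hb : 0 ≤ b) (hu : ContDiff ℝ 2 u) (hw : ContDiff ℝ 2 w)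
    (hu_ode : FisherKPPOn b u (Ioi 0)) (hw_ode : FisherKPPOn b w (Ioi 0))
    (hu_pos : ∀ x ≥ 0, 0 < u x) (hw_pos : ∀ x ≥ 0, 0 < w x)
    (hu_le : ∀ x ≥ 0, u x ≤ 1) (hw_le : ∀ x ≥ 0, w x ≤ 1) (h0 : u 0 = w 0) :
    EqOn u w (Ici 0) := by
  have hsq : ∀ {f : ℝ → ℝ}, (∀ x ≥ 0, 0 < f x) → (∀ x ≥ 0, f x ≤ 1) →
      ∀ x ≤ 0, f (-x) ^ 2 ≤ 1 * exp (-b * x) := fun hpos hle x hx => by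
    rw [one_mul]
    exact (pow_le_one₀ (hpos _ (by linarith)).le (hle _ (by linarith))).trans
      (one_le_exp (by nlinarith))
  have heq := eqOn_Iic_of_sq_le_exp (u := fun x => u (-x)) (w := fun x => w (-x))
    (hu.comp contDiff_neg) (hw.comp contDiff_neg)
    (by simpa using hu_ode.comp_neg) (by simpa using hw_ode.comp_neg)
    (fun x hx => hu_pos _ (by linarith)) (fun x hx => hw_pos _ (by linarith))
    (hsq hu_pos hu_le) (hsq hw_pos hw_le) (by simpa using h0)
  intro x hx
  simpa using heq (mem_Iic.2 (neg_nonpos.2 hx))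

end Uniqueness

theorem hasDerivAt_invFunOn_of_deriv_pos {u : ℝ → ℝ} {s : Set ℝ} {x : ℝ} (hu : ContDiff ℝ 1 u)
    (hs : Convex ℝ s) (hs' : IsOpen s) (hpos : ∀ y ∈ s, 0 < deriv u y) (hx : x ∈ s) :
    HasDerivAt (Function.invFunOn u s) (deriv u x)⁻¹ (u x) := by
  have hmono : StrictMonoOn u s :=
    strictMonoOn_of_deriv_pos hs hu.continuous.continuousOn (by rwa [hs'.interior_eq])
  have hinv : LeftInvOn (Function.invFunOn u s) u s := hmono.injOn.leftInvOn_invFunOn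
  have himg : u '' s ∈ 𝓝 (u x) := by
    rw [← (hu.contDiffAt.hasStrictDerivAt one_ne_zero).map_nhds_eq (hpos x hx).ne']
    exact image_mem_map (hs'.mem_nhds hx)
  have hcont : ContinuousAt (Function.invFunOn u s) (u x) := by
    refine StrictMonoOn.continuousAt_of_image_mem_nhds ?_ himg ?_
    · rintro _ ⟨y₁, hy₁, rfl⟩ _ ⟨y₂, hy₂, rfl⟩ h
      rw [hinv hy₁, hinv hy₂]
      exact (hmono.lt_iff_lt hy₁ hy₂).1 h
    · rw [hmono.injOn.invFunOn_image subset_rfl, hinv hx]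
      exact hs'.mem_nhds hx
  refine HasDerivAt.of_local_left_inverse (f := u) hcont ?_ (hpos x hx).ne' ?_
  · rw [hinv hx]
    exact (hu.differentiable one_ne_zero x).hasDerivAt
  · filter_upwards [himg] with y hy using Function.invFunOn_eq hy

/-- This is `G'` at a zero of `G` in `false_of_junction_crossings`, with `P = v' x`,
`Q = u' (Y (v x))` and `s = v x`. It equals `(s - s²) (aL² - aU²) / aL`. -/
theorem junction_gap_deriv_pos {aL aU bL bU P Q s : ℝ} (haU : 0 < aU) (haUL : aU < aL)
    (hcons : aL * bL = aU * bU) (hQ : Q ≠ 0) (hs : 0 < s) (hs1 : s < 1)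
    (hPQ : aU * Q = aL * P) :
    0 < aU * ((bU * Q - (s - s ^ 2)) * (Q⁻¹ * P)) - aL * (bL * P - (s - s ^ 2)) := by
  have haL : 0 < aL := haU.trans haUL
  have hQP : Q⁻¹ * P = aU / aL := by field_simp; linarith
  have hkey : aU * ((bU * Q - (s - s ^ 2)) * (aU / aL)) - aL * (bL * P - (s - s ^ 2))
      = (s - s ^ 2) * (aL ^ 2 - aU ^ 2) / aL := by
    field_simp
    linear_combination (-aU * Q) * hcons + aL * bL * hPQ
  rw [hQP, hkey]
  exact div_pos (mul_pos (by nlinarith) (by nlinarith)) haL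

theorem exists_leftInverse_hasDerivAt_of_deriv_pos {u : ℝ → ℝ} (hu : ContDiff ℝ 1 u)
    (hu' : ∀ x ≤ 0, 0 < deriv u x) :
    ∃ Y : ℝ → ℝ, ∀ y ≤ 0, Y (u y) = y ∧ HasDerivAt Y (deriv u y)⁻¹ (u y) := by
  obtain ⟨r, hr, hu'r⟩ : ∃ r > 0, ∀ x ∈ Iio r, 0 < deriv u x := by
    obtain ⟨l, r, ⟨hl, hr⟩, hlr⟩ := mem_nhds_iff_exists_Ioo_subset.1
      (hu.continuous_deriv_one.continuousAt.eventually (lt_mem_nhds (hu' 0 le_rfl)))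
    exact ⟨r, hr, fun x hx => (le_or_gt x 0).elim (hu' x) fun h => hlr ⟨hl.trans h, hx⟩⟩
  have hmono : StrictMonoOn u (Iio r) := strictMonoOn_of_deriv_pos (convex_Iio r)
    hu.continuous.continuousOn (by rwa [interior_Iio])
  exact ⟨Function.invFunOn u (Iio r), fun y hy =>
    ⟨hmono.injOn.leftInvOn_invFunOn (hy.trans_lt hr), hasDerivAt_invFunOn_of_deriv_pos hu
      (convex_Iio r) isOpen_Iio hu'r (hy.trans_lt hr)⟩⟩

theorem false_of_junction_crossings {u v : ℝ → ℝ} {bL bU aL aU c d : ℝ}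
    (hu : ContDiff ℝ 2 u) (hv : ContDiff ℝ 2 v)
    (hu_ode : FisherKPPOn bU u (Iic 0)) (hv_ode : FisherKPPOn bL v (Ici 0))
    (hu' : ∀ x ≤ 0, 0 < deriv u x) (hv' : ∀ x ≥ 0, 0 < deriv v x)
    (hc : c ≤ 0) (hd : 0 < d) (hv0 : 0 < v 0) (hvd : v d < 1)
    (huc : u c = v 0) (hu0 : u 0 = v d)
    (hKc : aU * deriv u c = aL * deriv v 0) (hKd : aU * deriv u 0 = aL * deriv v d)
    (haU : 0 < aU) (haUL : aU < aL) (hcons : aL * bL = aU * bU) : False := by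
  obtain ⟨Y, hYu⟩ := exists_leftInverse_hasDerivAt_of_deriv_pos (hu.of_le (by norm_num)) hu'
  have hv_mono : MonotoneOn v (Ici 0) :=
    (strictMonoOn_of_deriv_pos (convex_Ici 0) hv.continuous.continuousOn
      (by simpa using fun x hx => hv' x hx.le)).monotoneOn
  have hv_mem : ∀ x ∈ Icc 0 d, v x ∈ Icc (v 0) (v d) := fun x hx =>
    ⟨hv_mono self_mem_Ici hx.1 hx.1, hv_mono hx.1 (mem_Ici.2 hd.le) hx.2⟩
  have hY : ∀ x ∈ Icc 0 d, Y (v x) ∈ Icc c 0 ∧ u (Y (v x)) = v x ∧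
      HasDerivAt Y (deriv u (Y (v x)))⁻¹ (v x) := by
    intro x hx
    obtain ⟨y, hy, hyx⟩ := intermediate_value_Icc hc hu.continuous.continuousOn
      (by rw [huc, hu0]; exact hv_mem x hx)
    rw [← hyx, (hYu y hy.2).1]
    exact ⟨hy, rfl, (hYu y hy.2).2⟩
  set G := fun x => aU * deriv u (Y (v x)) - aL * deriv v x
  set G' := fun x => aU * (deriv (deriv u) (Y (v x)) * ((deriv u (Y (v x)))⁻¹ * deriv v x)) -
    aL * deriv (deriv v) x
  have hG : ∀ x ∈ Icc 0 d, HasDerivAt G (G' x) x := fun x hx =>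
    ((((hu.differentiable_deriv_two _).hasDerivAt.comp x
      ((hY x hx).2.2.comp x (hv.differentiable (by norm_num) x).hasDerivAt)).const_mul aU).sub
      ((hv.differentiable_deriv_two x).hasDerivAt.const_mul aL))
  have hG' : ∀ x ∈ Icc 0 d, G x = 0 → 0 < G' x := by
    intro x hx hGx
    obtain ⟨hyc, hyv, -⟩ := hY x hx
    have hux := hu_ode _ hyc.2
    have hvx := hv_ode x hx.1
    rw [hyv] at hux
    simp only [G']
    rw [show deriv (deriv u) (Y (v x)) = bU * deriv u (Y (v x)) - (v x - v x ^ 2) by linarith,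
      show deriv (deriv v) x = bL * deriv v x - (v x - v x ^ 2) by linarith]
    exact junction_gap_deriv_pos haU haUL hcons (hu' _ hyc.2).ne'
      (hv0.trans_le (hv_mem x hx).1) ((hv_mem x hx).2.trans_lt hvd) (sub_eq_zero.1 hGx)
  have hG0 : G 0 = 0 := by
    simp only [G]
    rw [← huc, (hYu c hc).1, hKc, sub_self]
  have hGd : G d = 0 := by
    simp only [G]
    rw [← hu0, (hYu 0 le_rfl).1, hKd, sub_self]
  exact (pos_of_deriv_pos_at_zeros hd hG hG' hG0.ge).ne' hGd

theorem sq_le_exp_of_le_exp {u : ℝ → ℝ} {b k C : ℝ} (hk : b ≤ 2 * k)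
    (hu_pos : ∀ x ≤ 0, 0 < u x) (hu : ∀ x ≤ 0, u x ≤ C * exp (k * x)) :
    ∀ x ≤ 0, u x ^ 2 ≤ C ^ 2 * exp (b * x) := fun x hx =>
  calc u x ^ 2 ≤ (C * exp (k * x)) ^ 2 := pow_le_pow_left₀ (hu_pos x hx).le (hu x hx) 2
    _ = C ^ 2 * exp (2 * k * x) := by rw [mul_pow, sq (exp _), ← exp_add]; ring_nf
    _ ≤ C ^ 2 * exp (b * x) :=
      mul_le_mul_of_nonneg_left (exp_le_exp.2 (by nlinarith)) (sq_nonneg C)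

namespace IsTwoBranchStatSol

variable {bL bU aL aU a a' : ℝ} {phiL phiU psiL psiU : ℝ → ℝ}

theorem lower_contDiff (h : IsTwoBranchStatSol bL bU aL aU a phiL phiU) : ContDiff ℝ 2 phiL :=
  h.1

theorem upper_contDiff (h : IsTwoBranchStatSol bL bU aL aU a phiL phiU) : ContDiff ℝ 2 phiU :=
  h.2.1

theorem lower_ode (h : IsTwoBranchStatSol bL bU aL aU a phiL phiU) :
    FisherKPPOn bL phiL (Ioi 0) :=
  h.2.2.1

theorem upper_ode (h : IsTwoBranchStatSol bL bU aL aU a phiL phiU) :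
    FisherKPPOn bU phiU (Iio 0) :=
  h.2.2.2.2.1

theorem lower_apply_zero (h : IsTwoBranchStatSol bL bU aL aU a phiL phiU) : phiL 0 = a :=
  h.2.2.2.2.2.2.1

theorem upper_apply_zero (h : IsTwoBranchStatSol bL bU aL aU a phiL phiU) : phiU 0 = a :=
  h.2.2.2.2.2.2.2.1

theorem kirchhoff (h : IsTwoBranchStatSol bL bU aL aU a phiL phiU) :
    aU * deriv phiU 0 = aL * deriv phiL 0 :=
  h.2.2.2.2.2.2.2.2

theorem lower_pos (h : IsTwoBranchStatSol bL bU aL aU a phiL phiU) (ha : 0 < a) :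
    ∀ x ≥ 0, 0 < phiL x := fun x hx =>
  hx.eq_or_lt.elim (fun hx => hx ▸ h.lower_apply_zero ▸ ha) fun hx => (h.2.2.2.1 x hx).1

theorem lower_le_one (h : IsTwoBranchStatSol bL bU aL aU a phiL phiU) (ha : a ≤ 1) :
    ∀ x ≥ 0, phiL x ≤ 1 := fun x hx =>
  hx.eq_or_lt.elim (fun hx => hx ▸ h.lower_apply_zero ▸ ha) fun hx => (h.2.2.2.1 x hx).2.le

theorem upper_pos (h : IsTwoBranchStatSol bL bU aL aU a phiL phiU) (ha : 0 < a) :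
    ∀ x ≤ 0, 0 < phiU x := fun x hx =>
  hx.eq_or_lt.elim (fun hx => hx.symm ▸ h.upper_apply_zero ▸ ha) fun hx =>
    (h.2.2.2.2.2.1 x hx).1

theorem deriv_lower_pos (h : IsTwoBranchStatSol bL bU aL aU a phiL phiU) (hbL : 0 ≤ bL) :
    ∀ x ≥ 0, 0 < deriv phiL x :=
  h.lower_ode.deriv_pos_of_Ioi hbL h.lower_contDiff h.2.2.2.1

theorem deriv_upper_pos (h : IsTwoBranchStatSol bL bU aL aU a phiL phiU) (hbL : 0 ≤ bL)
    (haL : 0 < aL) (haU : 0 < aU) : ∀ x ≤ 0, 0 < deriv phiU x := by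
  refine h.upper_ode.deriv_pos_of_Iio h.upper_contDiff h.2.2.2.2.2.1
    (pos_of_mul_pos_right ?_ haU.le)
  rw [h.kirchhoff]
  exact mul_pos haL (h.deriv_lower_pos hbL 0 le_rfl)

theorem kirchhoff_of_upper_shift {C C' c : ℝ} (h : IsTwoBranchStatSol bL bU aL aU a phiL phiU)
    (h' : IsTwoBranchStatSol bL bU aL aU a' psiL psiU) (ha : 0 < a) (ha' : 0 < a')
    (hc : c ≤ 0) (hψc : psiU c = a) (hφ_sq : ∀ x ≤ 0, phiU x ^ 2 ≤ C * exp (bU * x))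
    (hψ_sq : ∀ x ≤ 0, psiU x ^ 2 ≤ C' * exp (bU * x)) :
    aU * deriv psiU c = aL * deriv phiL 0 := by
  have hψc' : ContDiff ℝ 2 fun x => psiU (x + c) :=
    h'.upper_contDiff.comp (contDiff_id.add contDiff_const)
  have hU : EqOn phiU (fun x => psiU (x + c)) (Iic 0) :=
    eqOn_Iic_of_sq_le_exp (C₂ := C' * exp (bU * c)) h.upper_contDiff hψc' h.upper_ode
      ((h'.upper_ode.comp_add_const c).mono fun x (hx : x < 0) => (by linarith : x + c < 0))
      (h.upper_pos ha) (fun x hx => h'.upper_pos ha' _ (by linarith)) hφ_sq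
      (fun x hx => (hψ_sq (x + c) (by linarith)).trans_eq (by rw [mul_add, exp_add]; ring))
      (by rw [h.upper_apply_zero, zero_add, hψc])
  rw [← h.kirchhoff, deriv_eq_of_eqOn (uniqueDiffWithinAt_Iic 0) self_mem_Iic
    (h.upper_contDiff.differentiable (by norm_num) 0) (hψc'.differentiable (by norm_num) 0) hU,
    deriv_comp_add_const, zero_add]

theorem kirchhoff_of_lower_shift {d : ℝ} (h : IsTwoBranchStatSol bL bU aL aU a phiL phiU)
    (h' : IsTwoBranchStatSol bL bU aL aU a' psiL psiU) (hbL : 0 ≤ bL) (ha : 0 < a) (ha' : 0 < a')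
    (ha₁ : a ≤ 1) (ha₁' : a' ≤ 1) (hd : 0 ≤ d) (hφd : phiL d = a') :
    aU * deriv psiU 0 = aL * deriv phiL d := by
  have hφd' : ContDiff ℝ 2 fun x => phiL (x + d) :=
    h.lower_contDiff.comp (contDiff_id.add contDiff_const)
  have hL : EqOn psiL (fun x => phiL (x + d)) (Ici 0) :=
    eqOn_Ici_of_le_one hbL h'.lower_contDiff hφd' h'.lower_ode
      ((h.lower_ode.comp_add_const d).mono fun x (hx : 0 < x) => (by linarith : 0 < x + d))
      (h'.lower_pos ha') (fun x hx => h.lower_pos ha _ (by linarith))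
      (h'.lower_le_one ha₁') (fun x hx => h.lower_le_one ha₁ _ (by linarith))
      (by rw [h'.lower_apply_zero, zero_add, hφd])
  rw [h'.kirchhoff, deriv_eq_of_eqOn (uniqueDiffWithinAt_Ici 0) self_mem_Ici
    (h'.lower_contDiff.differentiable (by norm_num) 0) (hφd'.differentiable (by norm_num) 0) hL,
    deriv_comp_add_const, zero_add]

theorem junction_eq {C C' : ℝ} (hbL : 0 ≤ bL) (haU : 0 < aU) (haUL : aU < aL)
    (hcons : aL * bL = aU * bU) (ha : 0 < a) (ha' : a' < 1) (hle : a ≤ a')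
    (h : IsTwoBranchStatSol bL bU aL aU a phiL phiU)
    (h' : IsTwoBranchStatSol bL bU aL aU a' psiL psiU)
    (hφ_lim : Tendsto phiL atTop (𝓝 1)) (hψ_lim : Tendsto psiU atBot (𝓝 0))
    (hφ_sq : ∀ x ≤ 0, phiU x ^ 2 ≤ C * exp (bU * x))
    (hψ_sq : ∀ x ≤ 0, psiU x ^ 2 ≤ C' * exp (bU * x)) : a = a' := by
  refine hle.eq_or_lt.resolve_right fun hlt => ?_
  obtain ⟨c, hc, hψc⟩ : ∃ c ≤ 0, psiU c = a := by
    obtain ⟨x, hψx, hx⟩ :=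
      ((hψ_lim.eventually (gt_mem_nhds ha)).and (eventually_le_atBot 0)).exists
    obtain ⟨c, hc, hψc⟩ := intermediate_value_Icc hx h'.upper_contDiff.continuous.continuousOn
      ⟨hψx.le, h'.upper_apply_zero ▸ hle⟩
    exact ⟨c, hc.2, hψc⟩
  obtain ⟨d, hd, hφd⟩ : ∃ d ≥ 0, phiL d = a' := by
    obtain ⟨x, hφx, hx⟩ :=
      ((hφ_lim.eventually (lt_mem_nhds ha')).and (eventually_ge_atTop 0)).exists
    obtain ⟨d, hd, hφd⟩ := intermediate_value_Icc hx h.lower_contDiff.continuous.continuousOn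
      ⟨h.lower_apply_zero ▸ hle, hφx.le⟩
    exact ⟨d, hd.1, hφd⟩
  have hd' : 0 < d := hd.lt_of_ne (by rintro rfl; exact hlt.ne (h.lower_apply_zero ▸ hφd))
  exact false_of_junction_crossings h'.upper_contDiff h.lower_contDiff
    (by simpa using h'.upper_ode.closure h'.upper_contDiff)
    (by simpa using h.lower_ode.closure h.lower_contDiff)
    (h'.deriv_upper_pos hbL (haU.trans haUL) haU) (h.deriv_lower_pos hbL) hc hd'
    (h.lower_apply_zero ▸ ha) (hφd ▸ ha') (by rw [hψc, h.lower_apply_zero])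
    (by rw [h'.upper_apply_zero, hφd])
    (h.kirchhoff_of_upper_shift h' ha (ha.trans hlt) hc hψc hφ_sq hψ_sq)
    (h.kirchhoff_of_lower_shift h' hbL ha (ha.trans hlt) (hle.trans ha'.le) ha'.le hd hφd)
    haU haUL hcons

end IsTwoBranchStatSol

theorem two_branch_fast_decay_unique_general (bL bU aL aU a₁ a₂ : ℝ)
    (hbL0 : 0 < bL) (hbL : bL < 2) (hbU : 2 ≤ bU) (haL : 0 < aL) (haU : 0 < aU)
    (hcons : aL * bL = aU * bU)
    (ha₁ : 0 < a₁) (ha₂ : a₂ < 1) (hle : a₁ ≤ a₂)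
    (φ₁ φ₂ ψ₁ ψ₂ : ℝ → ℝ)
    (h1 : IsTwoBranchStatSol bL bU aL aU a₁ φ₁ φ₂)
    (h2 : IsTwoBranchStatSol bL bU aL aU a₂ ψ₁ ψ₂)
    (hlim1 : Tendsto φ₁ atTop (nhds 1))
    (hlim2' : Tendsto ψ₂ atBot (nhds 0))
    (hfast1 : ∃ C > (0 : ℝ), ∀ x ≤ (0 : ℝ),
      φ₂ x ≤ C * Real.exp ((bU + Real.sqrt (bU ^ 2 - 4)) / 2 * x))
    (hfast2 : ∃ C > (0 : ℝ), ∀ x ≤ (0 : ℝ),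
      ψ₂ x ≤ C * Real.exp ((bU + Real.sqrt (bU ^ 2 - 4)) / 2 * x)) :
    sInf {M : ℝ | 0 < M ∧ (∀ x ≥ (0 : ℝ), ψ₁ x ≤ M * φ₁ x) ∧
        (∀ x ≤ (0 : ℝ), ψ₂ x ≤ M * φ₂ x)} ≤ 1 ∧ a₁ = a₂ := by
  have haUL : aU < aL := by nlinarith
  have hk : bU ≤ 2 * ((bU + √(bU ^ 2 - 4)) / 2) := by linarith [sqrt_nonneg (bU ^ 2 - 4)]
  obtain ⟨C₁, -, hφ₂⟩ := hfast1
  obtain ⟨C₂, -, hψ₂⟩ := hfast2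
  have hφ_sq := sq_le_exp_of_le_exp hk (h1.upper_pos ha₁) hφ₂
  have hψ_sq := sq_le_exp_of_le_exp hk (h2.upper_pos (ha₁.trans_le hle)) hψ₂
  obtain rfl : a₁ = a₂ :=
    h1.junction_eq hbL0.le haU haUL hcons ha₁ ha₂ hle h2 hlim1 hlim2' hφ_sq hψ_sq
  have hL : EqOn φ₁ ψ₁ (Ici 0) :=
    eqOn_Ici_of_le_one hbL0.le h1.lower_contDiff h2.lower_contDiff h1.lower_ode h2.lower_ode
      (h1.lower_pos ha₁) (h2.lower_pos ha₁) (h1.lower_le_one ha₂.le) (h2.lower_le_one ha₂.le)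
      (h1.lower_apply_zero.trans h2.lower_apply_zero.symm)
  have hU : EqOn φ₂ ψ₂ (Iic 0) :=
    eqOn_Iic_of_sq_le_exp h1.upper_contDiff h2.upper_contDiff h1.upper_ode h2.upper_ode
      (h1.upper_pos ha₁) (h2.upper_pos ha₁) hφ_sq hψ_sq
      (h1.upper_apply_zero.trans h2.upper_apply_zero.symm)
  refine ⟨csInf_le ⟨0, fun M hM => hM.1.le⟩ ⟨one_pos, fun x hx => ?_, fun x hx => ?_⟩, rfl⟩
  · rw [one_mul, hL hx]
  · rw [one_mul, hU hx]

/-- The sliding argument: two fast-decaying solutions must have the same junction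
value; the scaling infimum `M*` cannot exceed 1. -/
theorem two_branch_fast_decay_unique (bL bU aL aU a₁ a₂ : ℝ)
    (hbL0 : 0 < bL) (hbL : bL < 2) (hbU : 2 ≤ bU) (haL : 0 < aL) (haU : 0 < aU)
    (hcons : aL * bL = aU * bU)
    (ha₁ : 0 < a₁) (ha₂ : a₂ < 1) (hle : a₁ ≤ a₂)
    (φ₁ φ₂ ψ₁ ψ₂ : ℝ → ℝ)
    (h1 : IsTwoBranchStatSol bL bU aL aU a₁ φ₁ φ₂)
    (h2 : IsTwoBranchStatSol bL bU aL aU a₂ ψ₁ ψ₂)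
    (hlim1 : Tendsto φ₁ atTop (nhds 1)) (hlim1' : Tendsto ψ₁ atTop (nhds 1))
    (hlim2 : Tendsto φ₂ atBot (nhds 0)) (hlim2' : Tendsto ψ₂ atBot (nhds 0))
    (hfast1 : ∃ C > (0 : ℝ), ∀ x ≤ (0 : ℝ),
      φ₂ x ≤ C * Real.exp ((bU + Real.sqrt (bU ^ 2 - 4)) / 2 * x))
    (hfast2 : ∃ C > (0 : ℝ), ∀ x ≤ (0 : ℝ),
      ψ₂ x ≤ C * Real.exp ((bU + Real.sqrt (bU ^ 2 - 4)) / 2 * x)) :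
    sInf {M : ℝ | 0 < M ∧ (∀ x ≥ (0 : ℝ), ψ₁ x ≤ M * φ₁ x) ∧
        (∀ x ≤ (0 : ℝ), ψ₂ x ≤ M * φ₂ x)} ≤ 1 ∧ a₁ = a₂ :=
  two_branch_fast_decay_unique_general bL bU aL aU a₁ a₂ hbL0 hbL hbU haL haU hcons ha₁ ha₂ hle φ₁
    φ₂ ψ₁ ψ₂ h1 h2 hlim1 hlim2' hfast1 hfast2
end
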